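/- arXiv:math/0102161 — 4 statements merged into one kernel-verified Lean document; each statement's English description precedes it below -/
import Mathlib

section
/- Let q₁, q₂ : [0,π] → ℝ be continuous with q₁(t) ≤ q₂(t) for all t and q₁ ≢ q₂ (strict inequality on some open subinterval). Let W₁, W₂ be the Prüfer arguments of the solutions of −v'' + q_i v = 0, v(0)=0, v'(0)=1. Then W₂(π) ≤ W₁(π), with strict inequality W₂(π) < W₁(π) provided sin(W₂(t)) is not identically zero on the set where q₁ < q₂. -/
/-!
With `f = W₂ - W₁` and `K = 2 max |1 + q₁|`, the identity `cos² = 1 - sin²` gives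
`f' ≤ K |f| - (q₂ - q₁) sin² W₂`. Fencing `f` from above by `ε e^{(K+1)t}` shows `f ≤ 0`, after
which `e^{Kt} f` is nonincreasing; at a point where `q₁ < q₂` and `sin W₂ ≠ 0` its derivative is
nonzero, so it cannot be constant and `f(π) < 0`.
-/

open Real Set

theorem abs_sin_sq_sub_sin_sq_le (x y : ℝ) : |sin x ^ 2 - sin y ^ 2| ≤ 2 * |x - y| := by
  have hsum : |sin x + sin y| ≤ 2 := by
    have := abs_add_le (sin x) (sin y)
    linarith [abs_sin_le_one x, abs_sin_le_one y]
  calc |sin x ^ 2 - sin y ^ 2| = |sin x + sin y| * |sin x - sin y| := by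
        rw [← abs_mul]; ring_nf
    _ ≤ 2 * |x - y| := mul_le_mul hsum (abs_sin_sub_sin_le x y) (abs_nonneg _) zero_le_two

/-- Since `cos² = 1 - sin²`, the left side equals
`(1 + q₁) (sin² w₁ - sin² w₂) - (q₂ - q₁) sin² w₂`. -/
theorem prufer_rhs_sub_le (q₁ q₂ w₁ w₂ : ℝ) :
    (cos w₂ ^ 2 - q₂ * sin w₂ ^ 2) - (cos w₁ ^ 2 - q₁ * sin w₁ ^ 2) ≤
      2 * |1 + q₁| * |w₂ - w₁| - (q₂ - q₁) * sin w₂ ^ 2 := by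
  have hlip : (1 + q₁) * (sin w₁ ^ 2 - sin w₂ ^ 2) ≤ 2 * |1 + q₁| * |w₂ - w₁| := by
    calc (1 + q₁) * (sin w₁ ^ 2 - sin w₂ ^ 2) ≤ |1 + q₁| * |sin w₁ ^ 2 - sin w₂ ^ 2| := by
          rw [← abs_mul]; exact le_abs_self _
      _ ≤ |1 + q₁| * (2 * |w₁ - w₂|) := by gcongr; exact abs_sin_sq_sub_sin_sq_le w₁ w₂
      _ = 2 * |1 + q₁| * |w₂ - w₁| := by rw [abs_sub_comm]; ring
  have := cos_sq' w₁
  have := cos_sq' w₂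
  nlinarith

section Comparison

variable {f f' : ℝ → ℝ} {a b K : ℝ}

theorem nonpos_of_hasDerivWithinAt_le_mul_self
    (hf : ∀ x ∈ Icc a b, HasDerivWithinAt f (f' x) (Icc a b) x) (ha : f a ≤ 0)
    (bound : ∀ x ∈ Icc a b, 0 < f x → f' x ≤ K * f x) :
    ∀ x ∈ Icc a b, f x ≤ 0 := by
  intro x hx
  refine le_of_forall_pos_le_add fun ε hε => ?_
  -- fence `f` by `ε e^{(|K|+1)(t-b)}`, which is at most `ε` on `[a, b]`
  set B : ℝ → ℝ := fun t => ε * exp ((|K| + 1) * (t - b))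
  have hB : ∀ t, HasDerivAt B ((|K| + 1) * B t) t := fun t =>
    ((((hasDerivAt_id t).sub_const b).const_mul (|K| + 1)).exp.const_mul ε).congr_deriv
      (by simp only [B, id]; ring)
  have hfB : f x ≤ B x := by
    refine image_le_of_deriv_right_lt_deriv_boundary
      (fun t ht => (hf t ht).continuousWithinAt)
      (fun t ht => (hf t (Ico_subset_Icc_self ht)).mono_of_mem_nhdsWithin
        (Icc_mem_nhdsGE_of_mem ht))
      (ha.trans (by positivity)) hB (fun t ht hft => ?_) hx
    have hpos : 0 < f t := hft ▸ by positivity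
    calc f' t ≤ K * f t := bound t (Ico_subset_Icc_self ht) hpos
      _ ≤ |K| * f t := by gcongr; exact le_abs_self K
      _ < (|K| + 1) * B t := by rw [← hft]; linarith
  have hBε : B x ≤ ε := by
    have : exp ((|K| + 1) * (x - b)) ≤ 1 :=
      exp_le_one_iff.2 (mul_nonpos_of_nonneg_of_nonpos (by positivity) (by linarith [hx.2]))
    simpa using mul_le_mul_of_nonneg_left this hε.le
  linarith

theorem AntitoneOn.lt_of_hasDerivWithinAt_ne_zero {t : ℝ} (hab : a < b)
    (hanti : AntitoneOn f (Icc a b)) (ht : t ∈ Icc a b)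
    (hf : HasDerivWithinAt f (f' t) (Icc a b) t) (hne : f' t ≠ 0) : f b < f a := by
  refine (hanti (left_mem_Icc.2 hab.le) (right_mem_Icc.2 hab.le) hab.le).lt_of_ne fun heq => hne ?_
  have hconst : ∀ x ∈ Icc a b, f x = f a := fun x hx =>
    le_antisymm (hanti (left_mem_Icc.2 hab.le) hx hx.1)
      (heq ▸ hanti hx (right_mem_Icc.2 hab.le) hx.2)
  have hzero : HasDerivWithinAt f 0 (Icc a b) t :=
    (hasDerivWithinAt_const t _ (f a)).congr hconst (hconst t ht)
  exact (uniqueDiffOn_Icc hab t ht).eq_deriv _ hf hzero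

/-- `e^{-K t} f` is antitone, and strictly decreases across a point where `f' < K f`. -/
theorem neg_of_hasDerivWithinAt_le_mul_self {t₀ : ℝ} (hab : a < b)
    (hf : ∀ x ∈ Icc a b, HasDerivWithinAt f (f' x) (Icc a b) x) (ha : f a ≤ 0)
    (bound : ∀ x ∈ Icc a b, f' x ≤ K * f x) (ht₀ : t₀ ∈ Icc a b)
    (hlt : f' t₀ < K * f t₀) : f b < 0 := by
  set g : ℝ → ℝ := fun t => exp (-K * t) * f t
  set g' : ℝ → ℝ := fun t => exp (-K * t) * (f' t - K * f t)
  have hg : ∀ x ∈ Icc a b, HasDerivWithinAt g (g' x) (Icc a b) x := fun x hx =>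
    ((((hasDerivAt_id x).const_mul (-K)).exp.hasDerivWithinAt).mul (hf x hx)).congr_deriv
      (by simp only [g', id]; ring)
  have hanti : AntitoneOn g (Icc a b) := by
    refine antitoneOn_of_hasDerivWithinAt_nonpos (f' := g') (convex_Icc a b)
      (fun x hx => (hg x hx).continuousWithinAt) (fun x hx => ?_) (fun x hx => ?_)
    · rw [interior_Icc] at hx ⊢
      exact (hg x (Ioo_subset_Icc_self hx)).mono Ioo_subset_Icc_self
    · rw [interior_Icc] at hx
      exact mul_nonpos_of_nonneg_of_nonpos (exp_pos _).le
        (sub_nonpos.2 (bound x (Ioo_subset_Icc_self hx)))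
  have hg_lt : g b < g a :=
    hanti.lt_of_hasDerivWithinAt_ne_zero hab ht₀ (hg t₀ ht₀)
      (mul_ne_zero (exp_pos _).ne' (sub_neg.2 hlt).ne)
  have hga : g a ≤ 0 := mul_nonpos_of_nonneg_of_nonpos (exp_pos _).le ha
  exact neg_of_mul_neg_right (hg_lt.trans_le hga) (exp_pos _).le

end Comparison

theorem prufer_comparison_general (q₁ q₂ W₁ W₂ : ℝ → ℝ)
    (hq₁ : ContinuousOn q₁ (Icc 0 π))
    (hle : ∀ t ∈ Icc (0:ℝ) π, q₁ t ≤ q₂ t)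
    (hW₁0 : W₁ 0 = 0) (hW₂0 : W₂ 0 = 0)
    (hW₁ : ∀ t ∈ Icc (0:ℝ) π,
      HasDerivWithinAt W₁ (cos (W₁ t) ^ 2 - q₁ t * sin (W₁ t) ^ 2) (Icc 0 π) t)
    (hW₂ : ∀ t ∈ Icc (0:ℝ) π,
      HasDerivWithinAt W₂ (cos (W₂ t) ^ 2 - q₂ t * sin (W₂ t) ^ 2) (Icc 0 π) t) :
    W₂ π ≤ W₁ π ∧
    ((¬ ∀ t ∈ Icc (0:ℝ) π, q₁ t < q₂ t → sin (W₂ t) = 0) → W₂ π < W₁ π) := by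
  obtain ⟨C, hC⟩ := isCompact_Icc.exists_bound_of_continuousOn (continuousOn_const.add hq₁)
  set f' : ℝ → ℝ := fun t =>
    (cos (W₂ t) ^ 2 - q₂ t * sin (W₂ t) ^ 2) - (cos (W₁ t) ^ 2 - q₁ t * sin (W₁ t) ^ 2)
  have hf : ∀ t ∈ Icc 0 π, HasDerivWithinAt (fun t => W₂ t - W₁ t) (f' t) (Icc 0 π) t :=
    fun t ht => (hW₂ t ht).sub (hW₁ t ht)
  have hf' : ∀ t ∈ Icc 0 π,
      f' t ≤ 2 * C * |W₂ t - W₁ t| - (q₂ t - q₁ t) * sin (W₂ t) ^ 2 := fun t ht =>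
    (prufer_rhs_sub_le _ _ _ _).trans (by gcongr; exact hC t ht)
  have hgap : ∀ t ∈ Icc 0 π, 0 ≤ (q₂ t - q₁ t) * sin (W₂ t) ^ 2 := fun t ht =>
    mul_nonneg (sub_nonneg.2 (hle t ht)) (sq_nonneg _)
  have hweak : ∀ t ∈ Icc 0 π, W₂ t - W₁ t ≤ 0 := by
    refine nonpos_of_hasDerivWithinAt_le_mul_self (K := 2 * C) hf (by simp [hW₁0, hW₂0])
      fun t ht hpos => ?_
    have := hf' t ht
    rw [abs_of_pos hpos] at this
    linarith [hgap t ht]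
  refine ⟨sub_nonpos.1 (hweak π (right_mem_Icc.2 pi_pos.le)), fun hsin => ?_⟩
  push Not at hsin
  obtain ⟨t₀, ht₀, hq, hsin₀⟩ := hsin
  have hf'_le : ∀ t ∈ Icc 0 π,
      f' t ≤ -(2 * C) * (W₂ t - W₁ t) - (q₂ t - q₁ t) * sin (W₂ t) ^ 2 :=
    fun t ht => by
      have := hf' t ht
      rw [abs_of_nonpos (hweak t ht)] at this
      linarith
  have hgap₀ : 0 < (q₂ t₀ - q₁ t₀) * sin (W₂ t₀) ^ 2 :=
    mul_pos (sub_pos.2 hq) (sq_pos_of_ne_zero hsin₀)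
  have hstrict := neg_of_hasDerivWithinAt_le_mul_self pi_pos hf (by simp [hW₁0, hW₂0])
    (fun t ht => (hf'_le t ht).trans (sub_le_self _ (hgap t ht))) ht₀
    ((hf'_le t₀ ht₀).trans_lt (sub_lt_self _ hgap₀))
  linarith

/-- Sturm comparison for the Prüfer argument: if q₁ ≤ q₂ with strict
inequality on some open subinterval, then W₂(π) ≤ W₁(π), strictly so unless sin W₂
vanishes identically where q₁ < q₂. -/
theorem prufer_comparison (q₁ q₂ W₁ W₂ : ℝ → ℝ)
    (hq₁ : ContinuousOn q₁ (Icc 0 π)) (hq₂ : ContinuousOn q₂ (Icc 0 π))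
    (hle : ∀ t ∈ Icc (0:ℝ) π, q₁ t ≤ q₂ t)
    (hne : ∃ s t : ℝ, s < t ∧ Ioo s t ⊆ Icc (0:ℝ) π ∧ ∀ x ∈ Ioo s t, q₁ x < q₂ x)
    (hW₁0 : W₁ 0 = 0) (hW₂0 : W₂ 0 = 0)
    (hW₁ : ∀ t ∈ Icc (0:ℝ) π,
      HasDerivWithinAt W₁ (cos (W₁ t) ^ 2 - q₁ t * sin (W₁ t) ^ 2) (Icc 0 π) t)
    (hW₂ : ∀ t ∈ Icc (0:ℝ) π,
      HasDerivWithinAt W₂ (cos (W₂ t) ^ 2 - q₂ t * sin (W₂ t) ^ 2) (Icc 0 π) t) :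
    W₂ π ≤ W₁ π ∧
    ((¬ ∀ t ∈ Icc (0:ℝ) π, q₁ t < q₂ t → sin (W₂ t) = 0) → W₂ π < W₁ π) :=
  prufer_comparison_general q₁ q₂ W₁ W₂ hq₁ hle hW₁0 hW₂0 hW₁ hW₂
end

section
/- Let f : ℝ → ℝ be C² with f'' < 0 everywhere, so that −f' is strictly increasing with limits a = lim_{s→−∞} −f'(s) and b = lim_{s→+∞} −f'(s) in [−∞, +∞]. Fix continuous functions h, p : [0,π] → ℝ with p(t) > 0 on (0,π). For λ ∈ ℝ let W₂(λ) denote the value at π of the Prüfer argument of the solution of −v'' + f'(h + λp)v = 0, v(0)=0, v'(0)=1. If b < ∞, then W₂(λ) → W₁(b, π) as λ → +∞, where W₁(b,π) is the Prüfer argument at π for the constant potential −b, and W₂(λ) < W₁(b,π) for all λ. -/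
open Real Set Filter Topology

lemma sin_sq_lip (a c : ℝ) : |Real.sin a ^ 2 - Real.sin c ^ 2| ≤ |a - c| := by
  have h1 : Real.sin a ^ 2 - Real.sin c ^ 2 = Real.sin (a + c) * Real.sin (a - c) := by
    rw [Real.sin_add, Real.sin_sub]
    nlinarith [Real.sin_sq_add_cos_sq a, Real.sin_sq_add_cos_sq c]
  rw [h1, abs_mul]
  calc |Real.sin (a + c)| * |Real.sin (a - c)| ≤ 1 * |a - c| := by
        apply mul_le_mul (abs_le.2 ⟨Real.neg_one_le_sin _, Real.sin_le_one _⟩) Real.abs_sin_le_abs (abs_nonneg _) zero_le_one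
    _ = |a - c| := one_mul _

lemma icc_mem_nhdsWithin_Ici {x : ℝ} (hx : x ∈ Ico 0 π) : Icc (0:ℝ) π ∈ 𝓝[Ici x] x := by
  rw [mem_nhdsWithin]
  exact ⟨Iio π, isOpen_Iio, hx.2, fun y hy => ⟨le_trans hx.1 hy.2, le_of_lt hy.1⟩⟩

lemma icc_mem_nhdsWithin_Ioi {x : ℝ} (hx : x ∈ Ico 0 π) : Icc (0:ℝ) π ∈ 𝓝[Ioi x] x := by
  rw [mem_nhdsWithin]
  exact ⟨Iio π, isOpen_Iio, hx.2, fun y hy => ⟨le_trans hx.1 (le_of_lt hy.2), le_of_lt hy.1⟩⟩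

/-- Comparison lemma for Prüfer-type ODEs. -/
lemma prufer_comp {q1 q2 W1 W2 : ℝ → ℝ} {K : ℝ} (hK : 0 < K)
    (hq : ∀ t ∈ Icc (0:ℝ) π, q2 t ≤ q1 t)
    (hKq : ∀ t ∈ Icc (0:ℝ) π, |1 + q2 t| ≤ K)
    (h0 : W1 0 ≤ W2 0)
    (hW1 : ∀ t ∈ Icc (0:ℝ) π, HasDerivWithinAt W1
      (Real.cos (W1 t) ^ 2 - q1 t * Real.sin (W1 t) ^ 2) (Icc 0 π) t)
    (hW2 : ∀ t ∈ Icc (0:ℝ) π, HasDerivWithinAt W2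
      (Real.cos (W2 t) ^ 2 - q2 t * Real.sin (W2 t) ^ 2) (Icc 0 π) t) :
    ∀ t ∈ Icc (0:ℝ) π, W1 t ≤ W2 t := by
  have hC1 : ContinuousOn W1 (Icc 0 π) :=
    fun t ht => (hW1 t ht).differentiableWithinAt.continuousWithinAt
  have hC2 : ContinuousOn W2 (Icc 0 π) :=
    fun t ht => (hW2 t ht).differentiableWithinAt.continuousWithinAt
  intro t ht
  have key : ∀ ε > 0, W1 t ≤ W2 t + ε * Real.exp (2 * K * t) := by
    intro ε hε
    have main : ∀ ⦃x⦄, x ∈ Icc (0:ℝ) π →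
        W1 x ≤ W2 x + ε * Real.exp (2 * K * x) := by
      refine image_le_of_deriv_right_lt_deriv_boundary'
        (f' := fun x => Real.cos (W1 x) ^ 2 - q1 x * Real.sin (W1 x) ^ 2)
        (B := fun x => W2 x + ε * Real.exp (2 * K * x))
        (B' := fun x => (Real.cos (W2 x) ^ 2 - q2 x * Real.sin (W2 x) ^ 2)
          + ε * (Real.exp (2 * K * x) * (2 * K))) hC1
        (fun x hx => (hW1 x (mem_Icc_of_Ico hx)).mono_of_mem_nhdsWithin
          (icc_mem_nhdsWithin_Ici hx)) ?_ ?_ ?_ ?_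
      · show W1 0 ≤ W2 0 + ε * Real.exp (2 * K * 0)
        have h1 : (0:ℝ) < ε * Real.exp (2 * K * 0) := by positivity
        linarith
      · exact hC2.add (Continuous.continuousOn (by continuity))
      · intro x hx
        have h2 : HasDerivAt (fun y => ε * Real.exp (2 * K * y))
            (ε * (Real.exp (2 * K * x) * (2 * K))) x := by
          have := (((Real.hasDerivAt_exp (2 * K * x)).comp x
            ((hasDerivAt_id x).const_mul (2 * K))).const_mul ε)
          exact this.congr_deriv (by ring)
        exact ((hW2 x (mem_Icc_of_Ico hx)).mono_of_mem_nhdsWithin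
          (icc_mem_nhdsWithin_Ici hx)).add h2.hasDerivWithinAt
      · intro x hx hxeq
        beta_reduce at hxeq
        have hx' := mem_Icc_of_Ico hx
        have hd : (0:ℝ) < ε * Real.exp (2 * K * x) := by positivity
        have hs1 : Real.cos (W1 x) ^ 2 - q1 x * Real.sin (W1 x) ^ 2
            ≤ Real.cos (W1 x) ^ 2 - q2 x * Real.sin (W1 x) ^ 2 := by
          have := hq x hx'
          nlinarith [sq_nonneg (Real.sin (W1 x))]
        have hcs : ∀ y : ℝ, Real.cos y ^ 2 - q2 x * Real.sin y ^ 2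
            = 1 - (1 + q2 x) * Real.sin y ^ 2 := by
          intro y; have := Real.sin_sq_add_cos_sq y; nlinarith
        have hlip : |Real.sin (W1 x) ^ 2 - Real.sin (W2 x) ^ 2| ≤ |W1 x - W2 x| :=
          sin_sq_lip _ _
        have habs : |W1 x - W2 x| = ε * Real.exp (2 * K * x) := by
          have hsub : W1 x - W2 x = ε * Real.exp (2 * K * x) := by rw [hxeq]; ring
          rw [hsub, abs_of_pos hd]
        have hKx := hKq x hx'
        have h1 : (1 + q2 x) * (Real.sin (W2 x) ^ 2 - Real.sin (W1 x) ^ 2)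
            ≤ K * (ε * Real.exp (2 * K * x)) := by
          calc (1 + q2 x) * (Real.sin (W2 x) ^ 2 - Real.sin (W1 x) ^ 2)
              ≤ |(1 + q2 x) * (Real.sin (W2 x) ^ 2 - Real.sin (W1 x) ^ 2)| := le_abs_self _
            _ = |1 + q2 x| * |Real.sin (W1 x) ^ 2 - Real.sin (W2 x) ^ 2| := by
                rw [abs_mul, abs_sub_comm]
            _ ≤ K * (ε * Real.exp (2 * K * x)) := by
                apply mul_le_mul hKx (habs ▸ hlip) (abs_nonneg _)
                exact le_of_lt hK
        calc Real.cos (W1 x) ^ 2 - q1 x * Real.sin (W1 x) ^ 2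
            ≤ Real.cos (W1 x) ^ 2 - q2 x * Real.sin (W1 x) ^ 2 := hs1
          _ = 1 - (1 + q2 x) * Real.sin (W1 x) ^ 2 := hcs _
          _ < (1 - (1 + q2 x) * Real.sin (W2 x) ^ 2)
              + ε * (Real.exp (2 * K * x) * (2 * K)) := by nlinarith
          _ = (Real.cos (W2 x) ^ 2 - q2 x * Real.sin (W2 x) ^ 2)
              + ε * (Real.exp (2 * K * x) * (2 * K)) := by rw [hcs]
    exact main ht
  -- let ε → 0
  by_contra hcon
  push_neg at hcon
  set δ := W1 t - W2 t with hδ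
  have hδpos : 0 < δ := by simp [hδ]; linarith
  have := key (δ / (2 * Real.exp (2 * K * t))) (by positivity)
  have hrw : δ / (2 * Real.exp (2 * K * t)) * Real.exp (2 * K * t) = δ / 2 := by
    field_simp
  rw [hrw] at this
  simp only [hδ] at this
  linarith

/-- Strict comparison at the endpoint. -/
lemma prufer_comp_strict {q1 q2 W1 W2 : ℝ → ℝ} {K : ℝ} (hK : 0 < K)
    (hq : ∀ t ∈ Icc (0:ℝ) π, q2 t < q1 t)
    (hKq : ∀ t ∈ Icc (0:ℝ) π, |1 + q2 t| ≤ K)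
    (h10 : W1 0 = 0) (h20 : W2 0 = 0)
    (hW1 : ∀ t ∈ Icc (0:ℝ) π, HasDerivWithinAt W1
      (Real.cos (W1 t) ^ 2 - q1 t * Real.sin (W1 t) ^ 2) (Icc 0 π) t)
    (hW2 : ∀ t ∈ Icc (0:ℝ) π, HasDerivWithinAt W2
      (Real.cos (W2 t) ^ 2 - q2 t * Real.sin (W2 t) ^ 2) (Icc 0 π) t) :
    W1 π < W2 π := by
  have hπ : (0:ℝ) < π := Real.pi_pos
  have h0mem : (0:ℝ) ∈ Icc (0:ℝ) π := ⟨le_refl _, le_of_lt hπ⟩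
  have hπmem : π ∈ Icc (0:ℝ) π := ⟨le_of_lt hπ, le_refl _⟩
  have hle : ∀ t ∈ Icc (0:ℝ) π, W1 t ≤ W2 t :=
    prufer_comp hK (fun t ht => le_of_lt (hq t ht)) hKq (by rw [h10, h20]) hW1 hW2
  rcases lt_or_eq_of_le (hle π hπmem) with h | heq
  · exact h
  exfalso
  -- g = exp(Kt) (W2 - W1) is monotone on Icc and vanishes at both ends, so ≡ 0
  set g : ℝ → ℝ := fun t => Real.exp (K * t) * (W2 t - W1 t) with hg
  have hC1 : ContinuousOn W1 (Icc 0 π) :=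
    fun t ht => (hW1 t ht).differentiableWithinAt.continuousWithinAt
  have hC2 : ContinuousOn W2 (Icc 0 π) :=
    fun t ht => (hW2 t ht).differentiableWithinAt.continuousWithinAt
  have hgC : ContinuousOn g (Icc 0 π) :=
    (Continuous.continuousOn (by continuity)).mul (hC2.sub hC1)
  have hderiv : ∀ t ∈ Ioo (0:ℝ) π, HasDerivAt g
      (K * Real.exp (K * t) * (W2 t - W1 t) + Real.exp (K * t) *
        ((Real.cos (W2 t) ^ 2 - q2 t * Real.sin (W2 t) ^ 2)
          - (Real.cos (W1 t) ^ 2 - q1 t * Real.sin (W1 t) ^ 2))) t := by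
    intro t ht
    have hmem : Icc (0:ℝ) π ∈ 𝓝 t := Icc_mem_nhds ht.1 ht.2
    have h1 : HasDerivAt W1 (Real.cos (W1 t) ^ 2 - q1 t * Real.sin (W1 t) ^ 2) t :=
      (hW1 t (Ioo_subset_Icc_self ht)).hasDerivAt hmem
    have h2 : HasDerivAt W2 (Real.cos (W2 t) ^ 2 - q2 t * Real.sin (W2 t) ^ 2) t :=
      (hW2 t (Ioo_subset_Icc_self ht)).hasDerivAt hmem
    have hexp : HasDerivAt (fun y => Real.exp (K * y)) (Real.exp (K * t) * K) t := by
      have := ((Real.hasDerivAt_exp (K * t)).comp t ((hasDerivAt_id t).const_mul K))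
      exact this.congr_deriv (by ring)
    have := hexp.mul (h2.sub h1)
    exact this.congr_deriv (by simp only [Pi.sub_apply]; ring)
  have hmono : MonotoneOn g (Icc 0 π) := by
    apply monotoneOn_of_deriv_nonneg (convex_Icc 0 π) hgC
    · rw [interior_Icc]
      exact fun t ht => ((hderiv t ht).differentiableAt).differentiableWithinAt
    · rw [interior_Icc]
      intro t ht
      rw [(hderiv t ht).deriv]
      have hts := Ioo_subset_Icc_self ht
      have hsin := sin_sq_lip (W2 t) (W1 t)
      have hKt := hKq t hts
      have hq' := le_of_lt (hq t hts)
      have hW : 0 ≤ W2 t - W1 t := by linarith [hle t hts]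
      have hcs : ∀ y : ℝ, Real.cos y ^ 2 = 1 - Real.sin y ^ 2 := by
        intro y; have := Real.sin_sq_add_cos_sq y; linarith
      have hepos : 0 < Real.exp (K * t) := Real.exp_pos _
      have h1 : (Real.cos (W2 t) ^ 2 - q2 t * Real.sin (W2 t) ^ 2)
          - (Real.cos (W1 t) ^ 2 - q2 t * Real.sin (W1 t) ^ 2)
          ≥ -(K * (W2 t - W1 t)) := by
        rw [hcs (W2 t), hcs (W1 t)]
        have habs1 : -(K * (W2 t - W1 t)) ≤ (1 + q2 t) * (Real.sin (W1 t) ^ 2 - Real.sin (W2 t) ^ 2) := by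
          have h3 : |(1 + q2 t) * (Real.sin (W1 t) ^ 2 - Real.sin (W2 t) ^ 2)| ≤ K * (W2 t - W1 t) := by
            rw [abs_mul]
            calc |1 + q2 t| * |Real.sin (W1 t) ^ 2 - Real.sin (W2 t) ^ 2|
                ≤ K * |W2 t - W1 t| := by
                  apply mul_le_mul hKt _ (abs_nonneg _) (le_of_lt hK)
                  rw [abs_sub_comm]; exact hsin
              _ = K * (W2 t - W1 t) := by rw [abs_of_nonneg hW]
          linarith [neg_abs_le ((1 + q2 t) * (Real.sin (W1 t) ^ 2 - Real.sin (W2 t) ^ 2))]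
        nlinarith
      have h2 : (Real.cos (W1 t) ^ 2 - q2 t * Real.sin (W1 t) ^ 2)
          - (Real.cos (W1 t) ^ 2 - q1 t * Real.sin (W1 t) ^ 2) ≥ 0 := by
        nlinarith [sq_nonneg (Real.sin (W1 t))]
      nlinarith
  have hg0 : g 0 = 0 := by simp [hg, h10, h20]
  have hgπ : g π = 0 := by simp [hg, heq]
  have hgzero : ∀ t ∈ Icc (0:ℝ) π, g t = 0 := by
    intro t ht
    have hle1 : g 0 ≤ g t := hmono h0mem ht ht.1
    have hle2 : g t ≤ g π := hmono ht hπmem ht.2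
    rw [hg0] at hle1; rw [hgπ] at hle2; linarith
  have hWeq : ∀ t ∈ Icc (0:ℝ) π, W2 t = W1 t := by
    intro t ht
    have := hgzero t ht
    have hepos : Real.exp (K * t) ≠ 0 := ne_of_gt (Real.exp_pos _)
    simp only [hg, mul_eq_zero] at this
    rcases this with h | h
    · exact absurd h hepos
    · linarith
  -- hence sin (W1 t) = 0 on the interior
  have hsin0 : ∀ t ∈ Ioo (0:ℝ) π, Real.sin (W1 t) = 0 := by
    intro t ht
    have hmem : Icc (0:ℝ) π ∈ 𝓝 t := Icc_mem_nhds ht.1 ht.2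
    have h1 : HasDerivAt W1 (Real.cos (W1 t) ^ 2 - q1 t * Real.sin (W1 t) ^ 2) t :=
      (hW1 t (Ioo_subset_Icc_self ht)).hasDerivAt hmem
    have h2' : HasDerivAt W2 (Real.cos (W2 t) ^ 2 - q2 t * Real.sin (W2 t) ^ 2) t :=
      (hW2 t (Ioo_subset_Icc_self ht)).hasDerivAt hmem
    have heqev : W2 =ᶠ[𝓝 t] W1 := by
      filter_upwards [hmem] with y hy
      exact hWeq y hy
    have h2 : HasDerivAt W1 (Real.cos (W2 t) ^ 2 - q2 t * Real.sin (W2 t) ^ 2) t :=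
      h2'.congr_of_eventuallyEq heqev.symm
    have huniq := h2.unique h1
    have hWt : W2 t = W1 t := hWeq t (Ioo_subset_Icc_self ht)
    rw [hWt] at huniq
    have : (q1 t - q2 t) * Real.sin (W1 t) ^ 2 = 0 := by linarith
    have hqne : q1 t - q2 t ≠ 0 := ne_of_gt (by linarith [hq t (Ioo_subset_Icc_self ht)])
    have := (mul_eq_zero.mp this).resolve_left hqne
    exact pow_eq_zero_iff two_ne_zero |>.mp this
  -- contradiction with slope 1 at 0
  have hd0 : HasDerivWithinAt W1 1 (Icc 0 π) 0 := by
    have := hW1 0 h0mem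
    rwa [h10, Real.cos_zero, Real.sin_zero, one_pow, zero_pow two_ne_zero, mul_zero, sub_zero] at this
  have hslope : Tendsto (slope W1 0) (𝓝[Icc (0:ℝ) π \ {0}] 0) (𝓝 1) :=
    hasDerivWithinAt_iff_tendsto_slope.mp hd0
  have hsetz : Icc (0:ℝ) π \ {0} = Ioc 0 π := by
    ext y; simp only [mem_diff, mem_Icc, mem_singleton_iff, mem_Ioc]
    constructor
    · rintro ⟨⟨h1, h2⟩, h3⟩; exact ⟨lt_of_le_of_ne h1 (Ne.symm h3), h2⟩
    · rintro ⟨h1, h2⟩; exact ⟨⟨le_of_lt h1, h2⟩, ne_of_gt h1⟩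
  rw [hsetz, nhdsWithin_Ioc_eq_nhdsGT hπ] at hslope
  have hev1 : ∀ᶠ y in 𝓝[>] (0:ℝ), slope W1 0 y ∈ Ioo (1/2 : ℝ) (3/2) :=
    hslope (Ioo_mem_nhds (by norm_num) (by norm_num))
  have hev2 : ∀ᶠ y in 𝓝[>] (0:ℝ), y < 1 :=
    eventually_nhdsWithin_of_eventually_nhds (Filter.Tendsto.eventually_lt_const one_pos tendsto_id)
  have hev3 : ∀ᶠ y in 𝓝[>] (0:ℝ), y ∈ Ioi (0:ℝ) := self_mem_nhdsWithin
  obtain ⟨y, hy1, hy2, hy3⟩ := (hev1.and (hev2.and hev3)).exists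
  have hypos : 0 < y := hy3
  have hy1' : y < 1 := hy2
  have hslopey : slope W1 0 y = W1 y / y := by
    rw [slope_def_field, h10]
    field_simp
    rw [sub_zero, sub_zero, mul_div_assoc, div_self hypos.ne', mul_one]
  rw [hslopey] at hy1
  have hyπ : y < π := lt_trans hy1' (by linarith [Real.pi_gt_three])
  have hW1y1 : 0 < W1 y := by
    have h12 := hy1.1
    rw [lt_div_iff₀ hypos] at h12
    nlinarith
  have hW1y2 : W1 y < π := by
    have h32 : W1 y < (3/2) * y := by
      have := hy1.2
      rw [div_lt_iff₀ hypos] at this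
      linarith
    nlinarith [Real.pi_gt_three]
  have := hsin0 y ⟨hypos, hyπ⟩
  have hpos := Real.sin_pos_of_pos_of_lt_pi hW1y1 hW1y2
  linarith


open MeasureTheory intervalIntegral

/-- f'' < 0, b = lim_{s→+∞} -f'(s) finite: the Prüfer argument W₂(λ) at π
for potential f'(h+λp) converges (increasingly, staying below) to the constant-coefficient
value W₁(b,π) as λ → +∞. -/
theorem prufer_limit_lambda_top_finite (f h p : ℝ → ℝ) (b : ℝ)
    (hf : ContDiff ℝ 2 f) (hconc : ∀ s : ℝ, deriv (deriv f) s < 0)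
    (hb : Tendsto (fun s => -deriv f s) atTop (𝓝 b))
    (hh : ContinuousOn h (Icc 0 π)) (hp : ContinuousOn p (Icc 0 π))
    (hppos : ∀ t ∈ Ioo (0:ℝ) π, 0 < p t)
    (W : ℝ → ℝ → ℝ) (Wb : ℝ → ℝ)
    (hW0 : ∀ lam : ℝ, W lam 0 = 0)
    (hW : ∀ lam : ℝ, ∀ t ∈ Icc (0:ℝ) π, HasDerivWithinAt (W lam)
      (cos (W lam t) ^ 2 - deriv f (h t + lam * p t) * sin (W lam t) ^ 2) (Icc 0 π) t)
    (hWb0 : Wb 0 = 0)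
    (hWb : ∀ t ∈ Icc (0:ℝ) π,
      HasDerivWithinAt Wb (cos (Wb t) ^ 2 + b * sin (Wb t) ^ 2) (Icc 0 π) t) :
    Tendsto (fun lam => W lam π) atTop (𝓝 (Wb π)) ∧ ∀ lam : ℝ, W lam π < Wb π := by
  have hπ : (0:ℝ) < π := Real.pi_pos
  have h0mem : (0:ℝ) ∈ Icc (0:ℝ) π := ⟨le_refl _, le_of_lt hπ⟩
  have hπmem : π ∈ Icc (0:ℝ) π := ⟨le_of_lt hπ, le_refl _⟩
  -- basic facts about deriv f
  have hdf_cont : Continuous (deriv f) := hf.continuous_deriv one_le_two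
  have hanti : StrictAnti (deriv f) := strictAnti_of_deriv_neg hconc
  have hdf_tend : Tendsto (deriv f) atTop (𝓝 (-b)) := by
    have := hb.neg; simpa using this
  have hlt : ∀ s : ℝ, -b < deriv f s := by
    intro s
    have h1 : -deriv f (s + 1) ≤ b := by
      apply ge_of_tendsto hb
      filter_upwards [eventually_ge_atTop (s + 1)] with x hx
      have : deriv f x ≤ deriv f (s + 1) := hanti.antitone hx
      linarith
    have h2 : deriv f (s + 1) < deriv f s := hanti (by linarith)
    linarith
  -- p is nonnegative on Icc
  have hp0 : ∀ t ∈ Icc (0:ℝ) π, 0 ≤ p t := by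
    intro t ht
    rcases eq_or_lt_of_le ht.1 with h0 | h0
    · rw [← h0]
      have hcw : Tendsto p (𝓝[Ioo (0:ℝ) π] 0) (𝓝 (p 0)) :=
        (hp 0 h0mem).mono Ioo_subset_Icc_self
      rw [nhdsWithin_Ioo_eq_nhdsGT hπ] at hcw
      apply ge_of_tendsto hcw
      have hev : ∀ᶠ x in 𝓝[>] (0:ℝ), x < π :=
        eventually_nhdsWithin_of_eventually_nhds (Filter.Tendsto.eventually_lt_const hπ tendsto_id)
      filter_upwards [self_mem_nhdsWithin, hev] with x hx hx'
      exact le_of_lt (hppos x ⟨hx, hx'⟩)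
    rcases eq_or_lt_of_le ht.2 with h1 | h1
    · rw [h1]
      have hcw : Tendsto p (𝓝[Ioo (0:ℝ) π] π) (𝓝 (p π)) :=
        (hp π hπmem).mono Ioo_subset_Icc_self
      rw [nhdsWithin_Ioo_eq_nhdsLT hπ] at hcw
      apply ge_of_tendsto hcw
      have hev : ∀ᶠ x in 𝓝[<] π, (0:ℝ) < x :=
        eventually_nhdsWithin_of_eventually_nhds (Filter.Tendsto.eventually_const_lt hπ tendsto_id)
      filter_upwards [self_mem_nhdsWithin, hev] with x hx hx'
      exact le_of_lt (hppos x ⟨hx', hx⟩)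
    · exact le_of_lt (hppos t ⟨h0, h1⟩)
  -- continuity facts
  have hWcont : ∀ lam : ℝ, ContinuousOn (W lam) (Icc 0 π) :=
    fun lam t ht => (hW lam t ht).differentiableWithinAt.continuousWithinAt
  have hWbcont : ContinuousOn Wb (Icc 0 π) :=
    fun t ht => (hWb t ht).differentiableWithinAt.continuousWithinAt
  have hqcont : ∀ lam : ℝ, ContinuousOn (fun t => deriv f (h t + lam * p t)) (Icc 0 π) :=
    fun lam => hdf_cont.comp_continuousOn (hh.add (continuousOn_const.mul hp))
  -- Wb satisfies the ODE in "q2 = -b" form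
  have hWb' : ∀ t ∈ Icc (0:ℝ) π, HasDerivWithinAt Wb
      (cos (Wb t) ^ 2 - (-b) * sin (Wb t) ^ 2) (Icc 0 π) t := by
    intro t ht
    have := hWb t ht
    convert this using 1
    ring
  set Kb : ℝ := |1 + -b| + 1 with hKbdef
  have hKb : 0 < Kb := by positivity
  have hKbq : ∀ t ∈ Icc (0:ℝ) π, |1 + (fun _ : ℝ => -b) t| ≤ Kb := by
    intro t _; simp only [hKbdef]; linarith [abs_nonneg (1 + -b)]
  -- upper bound W lam ≤ Wb
  have hub : ∀ lam : ℝ, ∀ t ∈ Icc (0:ℝ) π, W lam t ≤ Wb t := by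
    intro lam
    apply prufer_comp (q1 := fun t => deriv f (h t + lam * p t)) (q2 := fun _ => -b) hKb
      (fun t _ => le_of_lt (hlt _)) hKbq (by rw [hW0, hWb0]) (hW lam) hWb'
  -- strict bound at π
  have hstrict : ∀ lam : ℝ, W lam π < Wb π := by
    intro lam
    exact prufer_comp_strict (q1 := fun t => deriv f (h t + lam * p t)) (q2 := fun _ => -b)
      hKb (fun t _ => hlt _) hKbq (hW0 lam) hWb0 (hW lam) hWb'
  -- monotonicity in lam
  have hmono : ∀ t ∈ Icc (0:ℝ) π, Monotone (fun lam => W lam t) := by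
    intro t ht lam mu hlm
    obtain ⟨Cμ, hCμ⟩ := (isCompact_Icc (a := (0:ℝ)) (b := π)).exists_bound_of_continuousOn
      ((continuousOn_const.add (hqcont mu)))
    have hKμ : ∀ s ∈ Icc (0:ℝ) π, |1 + deriv f (h s + mu * p s)| ≤ |Cμ| + 1 := by
      intro s hs
      calc |1 + deriv f (h s + mu * p s)| ≤ Cμ := by
            have := hCμ s hs; rwa [Real.norm_eq_abs] at this
        _ ≤ |Cμ| + 1 := by linarith [le_abs_self Cμ]
    have hq12 : ∀ s ∈ Icc (0:ℝ) π, deriv f (h s + mu * p s) ≤ deriv f (h s + lam * p s) := by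
      intro s hs
      apply hanti.antitone
      have := hp0 s hs
      nlinarith
    exact prufer_comp (q1 := fun s => deriv f (h s + lam * p s))
      (q2 := fun s => deriv f (h s + mu * p s)) (by positivity) hq12 hKμ
      (by rw [hW0, hW0]) (hW lam) (hW mu) t ht
  -- bounded above, define the pointwise limit S
  have hbdd : ∀ t ∈ Icc (0:ℝ) π, BddAbove (range fun lam => W lam t) := by
    intro t ht
    exact ⟨Wb t, by rintro x ⟨lam, rfl⟩; exact hub lam t ht⟩
  set S : ℝ → ℝ := fun t => ⨆ lam : ℝ, W lam t with hSdef
  have htendS : ∀ t ∈ Icc (0:ℝ) π, Tendsto (fun lam => W lam t) atTop (𝓝 (S t)) :=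
    fun t ht => tendsto_atTop_ciSup (hmono t ht) (hbdd t ht)
  have htendN : ∀ t ∈ Icc (0:ℝ) π, Tendsto (fun n : ℕ => W n t) atTop (𝓝 (S t)) :=
    fun t ht => (htendS t ht).comp tendsto_natCast_atTop_atTop
  -- uniform bound C on the potentials for lam = n ≥ 0
  obtain ⟨t₀, ht₀, hmin⟩ := isCompact_Icc.exists_isMinOn (⟨0, h0mem⟩ : (Icc (0:ℝ) π).Nonempty) hh
  set C : ℝ := max |deriv f (h t₀)| |b| with hCdef
  have hCb : ∀ lam : ℝ, 0 ≤ lam → ∀ t ∈ Icc (0:ℝ) π, |deriv f (h t + lam * p t)| ≤ C := by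
    intro lam hlam t ht
    have harg : h t₀ ≤ h t + lam * p t := by
      have h1 : h t₀ ≤ h t := hmin ht
      have h2 : 0 ≤ lam * p t := mul_nonneg hlam (hp0 t ht)
      linarith
    have hupper : deriv f (h t + lam * p t) ≤ |deriv f (h t₀)| :=
      le_trans (hanti.antitone harg) (le_abs_self _)
    have hlower : -|b| ≤ deriv f (h t + lam * p t) := by
      have := hlt (h t + lam * p t)
      have : -|b| ≤ -b := neg_le_neg (le_abs_self b)
      linarith [hlt (h t + lam * p t)]
    rw [abs_le]
    constructor
    · calc -C ≤ -|b| := neg_le_neg (le_max_right _ _)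
        _ ≤ _ := hlower
    · exact le_trans hupper (le_max_left _ _)
  -- the integrand for each lam
  set F : ℝ → ℝ → ℝ := fun lam s =>
    cos (W lam s) ^ 2 - deriv f (h s + lam * p s) * sin (W lam s) ^ 2 with hFdef
  have hFcont : ∀ lam : ℝ, ContinuousOn (F lam) (Icc 0 π) := by
    intro lam
    exact ((Real.continuous_cos.comp_continuousOn (hWcont lam)).pow 2).sub
      ((hqcont lam).mul ((Real.continuous_sin.comp_continuousOn (hWcont lam)).pow 2))
  -- the integral equation
  have hinteq : ∀ lam : ℝ, ∀ t ∈ Icc (0:ℝ) π, W lam t = ∫ s in (0:ℝ)..t, F lam s := by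
    intro lam t ht
    have := intervalIntegral.integral_eq_sub_of_hasDeriv_right_of_le ht.1
      ((hWcont lam).mono (Icc_subset_Icc le_rfl ht.2))
      (f' := F lam) ?_ ?_
    · rw [this, hW0, sub_zero]
    · intro x hx
      have hxmem : x ∈ Icc (0:ℝ) π := ⟨le_of_lt hx.1, le_of_lt (lt_of_lt_of_le hx.2 ht.2)⟩
      have hxico : x ∈ Ico (0:ℝ) π := ⟨le_of_lt hx.1, lt_of_lt_of_le hx.2 ht.2⟩
      exact (hW lam x hxmem).mono_of_mem_nhdsWithin (icc_mem_nhdsWithin_Ioi hxico)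
    · apply ContinuousOn.intervalIntegrable
      rw [uIcc_of_le ht.1]
      exact (hFcont lam).mono (Icc_subset_Icc le_rfl ht.2)
  -- the limit integrand
  set Finf : ℝ → ℝ := fun s => cos (S s) ^ 2 + b * sin (S s) ^ 2 with hFinfdef
  -- dominated convergence: S satisfies the integral equation of the limit problem
  have hSint : ∀ t ∈ Icc (0:ℝ) π, S t = ∫ s in (0:ℝ)..t, Finf s := by
    intro t ht
    have hιsub : Set.uIoc (0:ℝ) t ⊆ Icc (0:ℝ) π := by
      rw [uIoc_of_le ht.1]
      exact fun x hx => ⟨le_of_lt hx.1, le_trans hx.2 ht.2⟩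
    have hmeasIoc : Set.uIoc (0:ℝ) t = Ioc (0:ℝ) t := uIoc_of_le ht.1
    have hDCT : Tendsto (fun n : ℕ => ∫ s in (0:ℝ)..t, F n s) atTop
        (𝓝 (∫ s in (0:ℝ)..t, Finf s)) := by
      apply intervalIntegral.tendsto_integral_filter_of_dominated_convergence
        (bound := fun _ => 1 + C)
      · apply Eventually.of_forall
        intro n
        rw [hmeasIoc]
        exact ((hFcont n).mono (hmeasIoc ▸ hιsub)).aestronglyMeasurable measurableSet_Ioc
      · apply Eventually.of_forall
        intro n
        apply ae_of_all
        intro x hx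
        have hxmem : x ∈ Icc (0:ℝ) π := hιsub hx
        have hq := hCb n (Nat.cast_nonneg n) x hxmem
        rw [Real.norm_eq_abs, abs_le]
        have hc2 : cos (W n x) ^ 2 ≤ 1 := cos_sq_le_one _
        have hs2 : sin (W n x) ^ 2 ≤ 1 := sin_sq_le_one _
        have hc2' : 0 ≤ cos (W n x) ^ 2 := sq_nonneg _
        have hs2' : 0 ≤ sin (W n x) ^ 2 := sq_nonneg _
        rw [abs_le] at hq
        constructor <;> simp only [hFdef] <;> nlinarith
      · exact intervalIntegrable_const
      · have hne : ∀ᵐ x : ℝ, x ≠ π := by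
          rw [MeasureTheory.ae_iff]
          simp only [ne_eq, not_not]
          have : {a : ℝ | a = π} = {π} := by ext y; simp
          rw [this]
          exact Real.volume_singleton
        apply Eventually.mono hne
        intro x hxne hx
        have hxmem : x ∈ Icc (0:ℝ) π := hιsub hx
        have hxIoo : x ∈ Ioo (0:ℝ) π := by
          rw [hmeasIoc] at hx
          exact ⟨hx.1, lt_of_le_of_ne hxmem.2 hxne⟩
        have hqlim : Tendsto (fun n : ℕ => deriv f (h x + n * p x)) atTop (𝓝 (-b)) := by
          apply hdf_tend.comp
          apply tendsto_atTop_add_const_left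
          exact Tendsto.atTop_mul_const (hppos x hxIoo) tendsto_natCast_atTop_atTop
        have hWlim := htendN x hxmem
        have h1 : Tendsto (fun n : ℕ => cos (W n x) ^ 2) atTop (𝓝 (cos (S x) ^ 2)) :=
          (((Real.continuous_cos.tendsto _).comp hWlim).pow 2)
        have h2 : Tendsto (fun n : ℕ => sin (W n x) ^ 2) atTop (𝓝 (sin (S x) ^ 2)) :=
          (((Real.continuous_sin.tendsto _).comp hWlim).pow 2)
        have := h1.sub (hqlim.mul h2)
        have heq : cos (S x) ^ 2 - -b * sin (S x) ^ 2 = Finf x := by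
          simp only [hFinfdef]; ring
        rw [heq] at this
        exact this
    have hlhs : Tendsto (fun n : ℕ => ∫ s in (0:ℝ)..t, F n s) atTop (𝓝 (S t)) := by
      have := htendN t ht
      apply this.congr
      intro n
      exact hinteq n t ht
    exact tendsto_nhds_unique hlhs hDCT
  -- measurability and integrability of the limit data
  have hSmeas : AEStronglyMeasurable S (volume.restrict (Icc (0:ℝ) π)) := by
    apply aestronglyMeasurable_of_tendsto_ae atTop
      (fun n : ℕ => ((hWcont n).aestronglyMeasurable measurableSet_Icc))
    rw [MeasureTheory.ae_restrict_iff' measurableSet_Icc]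
    exact ae_of_all _ fun x hx => htendN x hx
  have hFinfbound : ∀ x : ℝ, |Finf x| ≤ 1 + |b| := by
    intro x
    have hc2 : cos (S x) ^ 2 ≤ 1 := cos_sq_le_one _
    have hs2 : sin (S x) ^ 2 ≤ 1 := sin_sq_le_one _
    have hc2' : 0 ≤ cos (S x) ^ 2 := sq_nonneg _
    have hs2' : 0 ≤ sin (S x) ^ 2 := sq_nonneg _
    have hb1 : b ≤ |b| := le_abs_self b
    have hb2 : -|b| ≤ b := neg_abs_le b
    rw [abs_le]
    constructor <;> simp only [hFinfdef] <;> nlinarith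
  have hFinfmeas : AEStronglyMeasurable Finf (volume.restrict (Icc (0:ℝ) π)) := by
    have hcos : AEStronglyMeasurable (fun s => cos (S s)) (volume.restrict (Icc (0:ℝ) π)) :=
      Real.continuous_cos.comp_aestronglyMeasurable hSmeas
    have hsin : AEStronglyMeasurable (fun s => sin (S s)) (volume.restrict (Icc (0:ℝ) π)) :=
      Real.continuous_sin.comp_aestronglyMeasurable hSmeas
    have := (hcos.mul hcos).add (aestronglyMeasurable_const (b := b) |>.mul (hsin.mul hsin))
    simp only [hFinfdef, pow_two]
    exact this
  have hFinfint : IntegrableOn Finf (Icc (0:ℝ) π) volume := by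
    apply Integrable.mono' (g := fun _ => 1 + |b|) _ hFinfmeas
    · exact ae_of_all _ fun x => by rw [Real.norm_eq_abs]; exact hFinfbound x
    · exact integrableOn_const measure_Icc_lt_top.ne
  have hFinfII : ∀ t1 ∈ Icc (0:ℝ) π, ∀ t2 ∈ Icc (0:ℝ) π,
      IntervalIntegrable Finf volume t1 t2 := by
    intro t1 ht1 t2 ht2
    apply IntegrableOn.intervalIntegrable
    apply hFinfint.mono_set
    rw [← uIcc_of_le (le_of_lt hπ)]
    apply uIcc_subset_uIcc <;> rw [uIcc_of_le (le_of_lt hπ)] <;> assumption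
  have hSsub : ∀ t1 ∈ Icc (0:ℝ) π, ∀ t2 ∈ Icc (0:ℝ) π,
      S t2 - S t1 = ∫ s in t1..t2, Finf s := by
    intro t1 ht1 t2 ht2
    rw [hSint t2 ht2, hSint t1 ht1]
    exact intervalIntegral.integral_interval_sub_left (hFinfII 0 h0mem t2 ht2)
      (hFinfII 0 h0mem t1 ht1)
  have hScont : ContinuousOn S (Icc (0:ℝ) π) := by
    apply LipschitzOnWith.continuousOn (K := (⟨1 + |b|, by positivity⟩ : NNReal))
    apply LipschitzOnWith.of_dist_le_mul
    intro x hx y hy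
    rw [Real.dist_eq, Real.dist_eq]
    have heq := hSsub y hy x hx
    rw [show S x - S y = (S x - S y) from rfl, heq]
    have := intervalIntegral.norm_integral_le_of_norm_le_const (C := 1 + |b|)
      (f := Finf) (a := y) (b := x) (fun z _ => by rw [Real.norm_eq_abs]; exact hFinfbound z)
    rw [Real.norm_eq_abs] at this
    calc |∫ s in y..x, Finf s| ≤ (1 + |b|) * |x - y| := this
      _ = (⟨1 + |b|, by positivity⟩ : NNReal) * |x - y| := rfl
  -- clamp and upgrade to a globally defined solution Z
  set U : ℝ → ℝ := fun x => S (max 0 (min x π)) with hUdef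
  have hUcont : Continuous U := by
    apply hScont.comp_continuous
    · exact continuous_const.max (continuous_id.min continuous_const)
    · intro x
      exact ⟨le_max_left _ _, max_le (le_of_lt hπ) (min_le_right _ _)⟩
  have hUeq : ∀ t ∈ Icc (0:ℝ) π, U t = S t := by
    intro t ht
    simp only [hUdef]
    rw [min_eq_left ht.2, max_eq_right ht.1]
  set Fhat : ℝ → ℝ := fun s => cos (U s) ^ 2 + b * sin (U s) ^ 2 with hFhatdef
  have hFhatcont : Continuous Fhat := by
    apply Continuous.add
    · exact (Real.continuous_cos.comp hUcont).pow 2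
    · exact continuous_const.mul ((Real.continuous_sin.comp hUcont).pow 2)
  set Z : ℝ → ℝ := fun t => ∫ s in (0:ℝ)..t, Fhat s with hZdef
  have hZeqS : ∀ t ∈ Icc (0:ℝ) π, Z t = S t := by
    intro t ht
    rw [hSint t ht]
    apply intervalIntegral.integral_congr
    intro s hs
    rw [uIcc_of_le ht.1] at hs
    have hsmem : s ∈ Icc (0:ℝ) π := ⟨hs.1, le_trans hs.2 ht.2⟩
    simp only [hFhatdef, hFinfdef]
    rw [hUeq s hsmem]
  have hZ0 : Z 0 = 0 := intervalIntegral.integral_same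
  have hZode : ∀ t ∈ Icc (0:ℝ) π, HasDerivWithinAt Z
      (cos (Z t) ^ 2 - (-b) * sin (Z t) ^ 2) (Icc 0 π) t := by
    intro t ht
    have hd : HasDerivAt Z (Fhat t) t :=
      (hFhatcont.integral_hasStrictDerivAt 0 t).hasDerivAt
    have := hd.hasDerivWithinAt (s := Icc 0 π)
    refine this.congr_deriv ?_
    simp only [hFhatdef]
    rw [hUeq t ht, ← hZeqS t ht]
    ring
  have hZW : Z π = Wb π := by
    apply le_antisymm
    · exact prufer_comp (q1 := fun _ : ℝ => -b) (q2 := fun _ : ℝ => -b) hKb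
        (fun t _ => le_rfl) hKbq (by rw [hZ0, hWb0]) hZode hWb' π hπmem
    · exact prufer_comp (q1 := fun _ : ℝ => -b) (q2 := fun _ : ℝ => -b) hKb
        (fun t _ => le_rfl) hKbq (by rw [hZ0, hWb0]) hWb' hZode π hπmem
  have hSW : S π = Wb π := by rw [← hZeqS π hπmem]; exact hZW
  constructor
  · have := htendS π hπmem
    rwa [hSW] at this
  · exact hstrict
end

section
/- In the setting of the previous statement with f'' < 0, if b = lim_{s→+∞} −f'(s) = +∞, then W₂(λ) → +∞ as λ → +∞. Symmetrically, as λ → −∞, W₂(λ) decreases to W₁(a, π) where a = lim_{s→−∞} −f'(s). -/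
open Real Set Filter Topology

lemma sin_sq_sub (x y : ℝ) :
    Real.sin x ^ 2 - Real.sin y ^ 2 = Real.sin (x + y) * Real.sin (x - y) := by
  rw [Real.sin_add, Real.sin_sub]
  have hx := Real.sin_sq_add_cos_sq x
  have hy := Real.sin_sq_add_cos_sq y
  linear_combination Real.sin y ^ 2 * hx - Real.sin x ^ 2 * hy

lemma abs_sin_sq_sub_le (x y : ℝ) : |Real.sin x ^ 2 - Real.sin y ^ 2| ≤ |x - y| := by
  rw [sin_sq_sub, abs_mul]
  calc |Real.sin (x+y)| * |Real.sin (x-y)| ≤ 1 * |x - y| := by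
        apply mul_le_mul (abs_le.2 ⟨Real.neg_one_le_sin _, Real.sin_le_one _⟩)
          (Real.abs_sin_le_abs) (abs_nonneg _) zero_le_one
    _ = |x - y| := one_mul _

lemma toIci {u : ℝ → ℝ} {d x : ℝ} (hx : x ∈ Set.Ico (0:ℝ) π)
    (h : HasDerivWithinAt u d (Icc 0 π) x) : HasDerivWithinAt u d (Ici x) x :=
  (h.mono (Icc_subset_Icc_left hx.1)).mono_of_mem_nhdsWithin
    (Icc_mem_nhdsGE_of_mem ⟨le_rfl, hx.2⟩)

lemma gron {w wd : ℝ → ℝ} {t0 t1 K ε δ : ℝ} (h0 : 0 ≤ t0) (h1 : t1 ≤ π) (h01 : t0 ≤ t1)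
    (hw : ∀ t ∈ Icc (0:ℝ) π, HasDerivWithinAt w (wd t) (Icc 0 π) t)
    (hδ : w t0 ≤ δ) (hb : ∀ x ∈ Ico t0 t1, wd x ≤ K * w x + ε) :
    w t1 ≤ gronwallBound δ K ε (t1 - t0) := by
  have sub : Icc t0 t1 ⊆ Icc (0:ℝ) π := Icc_subset_Icc h0 h1
  have hcont : ContinuousOn w (Icc t0 t1) :=
    fun t ht => ((hw t (sub ht)).continuousWithinAt).mono sub
  refine le_gronwallBound_of_liminf_deriv_right_le hcont ?_ hδ hb t1 ⟨h01, le_rfl⟩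
  intro x hx r hr
  have hx' : x ∈ Ico (0:ℝ) π := ⟨le_trans h0 hx.1, lt_of_lt_of_le hx.2 h1⟩
  have H := toIci hx' (hw x ⟨hx'.1, hx'.2.le⟩)
  have hs := hasDerivWithinAt_iff_tendsto_slope.mp H
  rw [Ici_sdiff_left] at hs
  have hev : ∀ᶠ z in 𝓝[>] x, slope w x z < r := hs.eventually (eventually_lt_nhds hr)
  refine hev.frequently.mono fun z hz => ?_
  rwa [slope_def_field, div_eq_inv_mul] at hz

lemma barrier {u Q : ℝ → ℝ}
    (hu : ∀ t ∈ Icc (0:ℝ) π, HasDerivWithinAt u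
      (Real.cos (u t) ^ 2 + Q t * Real.sin (u t) ^ 2) (Icc 0 π) t)
    {c t0 t1 : ℝ} (hc : Real.sin c = 0) (ht0 : t0 ∈ Icc (0:ℝ) π) (ht1 : t1 ∈ Icc (0:ℝ) π)
    (h01 : t0 ≤ t1) (h0 : c ≤ u t0) : c ≤ u t1 := by
  by_contra hlt
  push_neg at hlt
  have hcont : ContinuousOn u (Icc 0 π) := fun t ht => (hu t ht).continuousWithinAt
  set S := Icc t0 t1 ∩ u ⁻¹' (Ici c) with hS
  have hmem : ∀ {z}, z ∈ S → z ∈ Icc (0:ℝ) π :=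
    fun hz => (Icc_subset_Icc ht0.1 ht1.2) hz.1
  have hne : S.Nonempty := ⟨t0, ⟨le_rfl, h01⟩, h0⟩
  have hbdd : BddAbove S := ⟨t1, fun z hz => hz.1.2⟩
  have hclosed : IsClosed S :=
    (hcont.mono (Icc_subset_Icc ht0.1 ht1.2)).preimage_isClosed_of_isClosed
      isClosed_Icc isClosed_Ici
  set τ := sSup S with hτ
  have hτS : τ ∈ S := hclosed.csSup_mem hne hbdd
  have hτc : c ≤ u τ := hτS.2
  have hτt1 : τ < t1 := lt_of_le_of_ne hτS.1.2 (fun he => absurd (he ▸ hτc) (not_le.2 hlt))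
  have hτt0 : t0 ≤ τ := hτS.1.1
  -- u τ = c
  have huτ : u τ = c := by
    refine le_antisymm ?_ hτc
    by_contra hgt
    push_neg at hgt
    have hco : ContinuousWithinAt u (Icc 0 π) τ := hcont τ (hmem hτS)
    have hev : ∀ᶠ z in 𝓝[Icc (0:ℝ) π] τ, c < u z := hco.eventually (eventually_gt_nhds hgt)
    have hIoc : Ioc τ t1 ⊆ Icc (0:ℝ) π := fun z hz =>
      ⟨le_trans (hmem hτS).1 hz.1.le, le_trans hz.2 ht1.2⟩
    have hfil : 𝓝[Ioc τ t1] τ = 𝓝[>] τ := nhdsWithin_Ioc_eq_nhdsGT hτt1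
    have hev2 : ∀ᶠ z in 𝓝[Ioc τ t1] τ, c < u z := nhdsWithin_mono τ hIoc hev
    rw [hfil] at hev2
    have hev3 : ∀ᶠ z in 𝓝[>] τ, z ∈ Ioc τ t1 := by
      rw [← hfil]; exact eventually_mem_nhdsWithin
    obtain ⟨z, hz1, hz2⟩ := (hev2.and hev3).exists
    have hzS : z ∈ S := ⟨⟨le_trans hτt0 hz2.1.le, hz2.2⟩, le_of_lt hz1⟩
    exact absurd (le_csSup hbdd hzS) (not_le.2 hz2.1)
  -- derivative 1 at τ pointing right
  have hτmem : τ ∈ Ico (0:ℝ) π := ⟨(hmem hτS).1, lt_of_lt_of_le hτt1 ht1.2⟩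
  have hder : HasDerivWithinAt u 1 (Ici τ) τ := by
    have := toIci hτmem (hu τ (hmem hτS))
    rw [huτ, hc] at this
    have h1 : Real.cos c ^ 2 + Q τ * 0 ^ 2 = 1 := by
      have := Real.sin_sq_add_cos_sq c
      rw [hc] at this; nlinarith
    rwa [h1] at this
  have hs := hasDerivWithinAt_iff_tendsto_slope.mp hder
  rw [Ici_sdiff_left] at hs
  have hev : ∀ᶠ z in 𝓝[>] τ, 0 < slope u τ z :=
    hs.eventually (eventually_gt_nhds one_pos)
  have hev2 : ∀ᶠ z in 𝓝[>] τ, z ≤ t1 :=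
    eventually_nhdsWithin_of_eventually_nhds (eventually_le_nhds hτt1)
  obtain ⟨z, hza, hz3⟩ := ((hev.and hev2).and eventually_mem_nhdsWithin).exists
  obtain ⟨hz1, hz2⟩ := hza
  have hzτ : τ < z := hz3
  have : 0 < u z - u τ := by
    have := mul_pos hz1 (sub_pos.2 hzτ)
    rwa [slope_def_field, div_mul_cancel₀ _ (by linarith : z - τ ≠ 0)] at this
  have hzS : z ∈ S := ⟨⟨le_trans hτt0 hzτ.le, hz2⟩, by rw [mem_preimage, mem_Ici, ← huτ]; linarith⟩
  exact absurd (le_csSup hbdd hzS) (not_le.2 hzτ)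

lemma wbound {K Qu Qv uu vv : ℝ} (hQ : Qu ≤ Qv) (hK : |Qu - 1| ≤ K) :
    (Real.cos uu ^ 2 + Qu * Real.sin uu ^ 2) - (Real.cos vv ^ 2 + Qv * Real.sin vv ^ 2)
      ≤ K * |uu - vv| := by
  have h1 : Qu * Real.sin uu ^ 2 - Qv * Real.sin vv ^ 2
      ≤ Qu * (Real.sin uu ^ 2 - Real.sin vv ^ 2) := by nlinarith [sq_nonneg (Real.sin vv)]
  have h2 : Real.cos uu ^ 2 - Real.cos vv ^ 2 = -(Real.sin uu ^ 2 - Real.sin vv ^ 2) := by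
    rw [Real.cos_sq', Real.cos_sq']; ring
  have h3 : (Qu - 1) * (Real.sin uu ^ 2 - Real.sin vv ^ 2) ≤ K * |uu - vv| := by
    calc (Qu - 1) * (Real.sin uu ^ 2 - Real.sin vv ^ 2)
        ≤ |Qu - 1| * |Real.sin uu ^ 2 - Real.sin vv ^ 2| := by
          rw [← abs_mul]; exact le_abs_self _
      _ ≤ K * |uu - vv| := mul_le_mul hK (abs_sin_sq_sub_le _ _) (abs_nonneg _)
          (le_trans (abs_nonneg _) hK)
  nlinarith

/-- Weak comparison. -/
lemma compare {u v Qu Qv : ℝ → ℝ} {K : ℝ}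
    (hu : ∀ t ∈ Icc (0:ℝ) π, HasDerivWithinAt u
      (Real.cos (u t) ^ 2 + Qu t * Real.sin (u t) ^ 2) (Icc 0 π) t)
    (hv : ∀ t ∈ Icc (0:ℝ) π, HasDerivWithinAt v
      (Real.cos (v t) ^ 2 + Qv t * Real.sin (v t) ^ 2) (Icc 0 π) t)
    (hQ : ∀ t ∈ Icc (0:ℝ) π, Qu t ≤ Qv t)
    (hK : ∀ t ∈ Icc (0:ℝ) π, |Qu t - 1| ≤ K)
    (h0 : u 0 ≤ v 0) : ∀ t ∈ Icc (0:ℝ) π, u t ≤ v t := by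
  intro t1 ht1
  by_contra hgt
  push_neg at hgt
  set w := fun t => u t - v t with hwdef
  have hwd : ∀ t ∈ Icc (0:ℝ) π, HasDerivWithinAt w
      ((Real.cos (u t) ^ 2 + Qu t * Real.sin (u t) ^ 2)
        - (Real.cos (v t) ^ 2 + Qv t * Real.sin (v t) ^ 2)) (Icc 0 π) t :=
    fun t ht => (hu t ht).sub (hv t ht)
  have hcont : ContinuousOn w (Icc 0 π) := fun t ht => (hwd t ht).continuousWithinAt
  set S := Icc 0 t1 ∩ w ⁻¹' (Iic 0) with hS
  have hsub : Icc 0 t1 ⊆ Icc (0:ℝ) π := Icc_subset_Icc le_rfl ht1.2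
  have hne : S.Nonempty := ⟨0, ⟨le_rfl, ht1.1⟩, by simpa [hwdef] using sub_nonpos.2 h0⟩
  have hbdd : BddAbove S := ⟨t1, fun z hz => hz.1.2⟩
  have hclosed : IsClosed S :=
    (hcont.mono hsub).preimage_isClosed_of_isClosed isClosed_Icc isClosed_Iic
  set τ := sSup S with hτdef
  have hτS : τ ∈ S := hclosed.csSup_mem hne hbdd
  have hτ1 : τ ≤ t1 := hτS.1.2
  have hτ0 : 0 ≤ τ := hτS.1.1
  have hwτle : w τ ≤ 0 := hτS.2
  have hτlt : τ < t1 := by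
    rcases lt_or_eq_of_le hτ1 with hx | hx
    · exact hx
    · exact absurd (hx ▸ hwτle) (not_le.2 (sub_pos.2 hgt))
  have hwpos : ∀ z, τ < z → z ≤ t1 → 0 < w z := by
    intro z h1 h2
    by_contra hno
    push_neg at hno
    exact absurd (le_csSup hbdd ⟨⟨le_trans hτ0 h1.le, h2⟩, hno⟩) (not_le.2 h1)
  -- w τ = 0 by right continuity
  have hwτ : w τ = 0 := by
    refine le_antisymm hwτle ?_
    have hτI : τ ∈ Icc (0:ℝ) π := hsub hτS.1
    have hco : ContinuousWithinAt w (Icc 0 π) τ := hcont τ hτI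
    have hIoc : Ioc τ t1 ⊆ Icc (0:ℝ) π := fun z hz =>
      ⟨le_trans hτ0 hz.1.le, le_trans hz.2 ht1.2⟩
    have hfil : 𝓝[Ioc τ t1] τ = 𝓝[>] τ := nhdsWithin_Ioc_eq_nhdsGT hτlt
    have hco2 : Tendsto w (𝓝[>] τ) (𝓝 (w τ)) := by
      rw [← hfil]; exact hco.mono hIoc
    have hev : ∀ᶠ z in 𝓝[>] τ, 0 ≤ w z := by
      rw [← hfil]
      filter_upwards [eventually_mem_nhdsWithin] with z hz
      exact (hwpos z hz.1 hz.2).le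
    exact ge_of_tendsto hco2 hev
  have hbound : ∀ x ∈ Ico τ t1, ((Real.cos (u x) ^ 2 + Qu x * Real.sin (u x) ^ 2)
      - (Real.cos (v x) ^ 2 + Qv x * Real.sin (v x) ^ 2)) ≤ K * w x + 0 := by
    intro x hx
    have hxI : x ∈ Icc (0:ℝ) π := ⟨le_trans hτ0 hx.1, le_trans hx.2.le ht1.2⟩
    have hwx : 0 ≤ w x := by
      rcases eq_or_lt_of_le hx.1 with he | hlt
      · rw [← he, hwτ]
      · exact (hwpos x hlt hx.2.le).le
    calc _ ≤ K * |u x - v x| := wbound (hQ x hxI) (hK x hxI)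
      _ = K * w x + 0 := by rw [abs_of_nonneg hwx]; ring
  have hfin := gron hτ0 ht1.2 hτlt.le hwd (hwτ.le.trans (le_refl 0)) hbound
  rw [gronwallBound_ε0, zero_mul] at hfin
  exact absurd hfin (not_le.2 (hwpos t1 hτlt le_rfl))

/-- Strict comparison propagates. -/
lemma strict_compare {u v Qu Qv : ℝ → ℝ} {K : ℝ}
    (hu : ∀ t ∈ Icc (0:ℝ) π, HasDerivWithinAt u
      (Real.cos (u t) ^ 2 + Qu t * Real.sin (u t) ^ 2) (Icc 0 π) t)
    (hv : ∀ t ∈ Icc (0:ℝ) π, HasDerivWithinAt v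
      (Real.cos (v t) ^ 2 + Qv t * Real.sin (v t) ^ 2) (Icc 0 π) t)
    (hQ : ∀ t ∈ Icc (0:ℝ) π, Qu t ≤ Qv t)
    (hK : ∀ t ∈ Icc (0:ℝ) π, |Qu t - 1| ≤ K)
    {t0 t1 : ℝ} (ht0 : t0 ∈ Icc (0:ℝ) π) (ht1 : t1 ∈ Icc (0:ℝ) π) (h01 : t0 ≤ t1)
    (h0 : u t0 < v t0) : u t1 < v t1 := by
  by_contra hge
  push_neg at hge
  set w := fun t => u t - v t with hwdef
  have hwd : ∀ t ∈ Icc (0:ℝ) π, HasDerivWithinAt w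
      ((Real.cos (u t) ^ 2 + Qu t * Real.sin (u t) ^ 2)
        - (Real.cos (v t) ^ 2 + Qv t * Real.sin (v t) ^ 2)) (Icc 0 π) t :=
    fun t ht => (hu t ht).sub (hv t ht)
  have hcont : ContinuousOn w (Icc 0 π) := fun t ht => (hwd t ht).continuousWithinAt
  set S := Icc t0 t1 ∩ w ⁻¹' (Ici 0) with hS
  have hsub : Icc t0 t1 ⊆ Icc (0:ℝ) π := Icc_subset_Icc ht0.1 ht1.2
  have hne : S.Nonempty := ⟨t1, ⟨h01, le_rfl⟩, by simpa [hwdef] using sub_nonneg.2 hge⟩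
  have hbdd : BddBelow S := ⟨t0, fun z hz => hz.1.1⟩
  have hclosed : IsClosed S :=
    (hcont.mono hsub).preimage_isClosed_of_isClosed isClosed_Icc isClosed_Ici
  set τ := sInf S with hτdef
  have hτS : τ ∈ S := hclosed.csInf_mem hne hbdd
  have hτ1 : τ ≤ t1 := hτS.1.2
  have hτ0 : t0 ≤ τ := hτS.1.1
  have hwτge : 0 ≤ w τ := hτS.2
  have hτgt : t0 < τ := by
    rcases lt_or_eq_of_le hτ0 with hx | hx
    · exact hx
    · exact absurd (hx ▸ hwτge) (not_le.2 (sub_neg.2 h0))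
  have hwneg : ∀ z, t0 ≤ z → z < τ → w z < 0 := by
    intro z h1 h2
    by_contra hno
    push_neg at hno
    exact absurd (csInf_le hbdd ⟨⟨h1, le_trans h2.le hτ1⟩, hno⟩) (not_le.2 h2)
  have hKnn : 0 ≤ K := le_trans (abs_nonneg _) (hK 0 ⟨le_rfl, pi_pos.le⟩)
  have hbound : ∀ x ∈ Ico t0 τ, ((Real.cos (u x) ^ 2 + Qu x * Real.sin (u x) ^ 2)
      - (Real.cos (v x) ^ 2 + Qv x * Real.sin (v x) ^ 2)) ≤ (-K) * w x + 0 := by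
    intro x hx
    have hxI : x ∈ Icc (0:ℝ) π := ⟨le_trans ht0.1 hx.1, le_trans hx.2.le (hsub hτS.1).2⟩
    have hwx : w x < 0 := hwneg x hx.1 hx.2
    calc _ ≤ K * |u x - v x| := wbound (hQ x hxI) (hK x hxI)
      _ = (-K) * w x + 0 := by rw [abs_of_neg hwx]; ring
  have hτI : τ ∈ Icc (0:ℝ) π := hsub hτS.1
  have hfin := gron ht0.1 hτI.2 hτgt.le hwd (le_refl (w t0)) hbound
  rw [gronwallBound_ε0] at hfin
  have : w t0 * Real.exp (-K * (τ - t0)) < 0 :=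
    mul_neg_of_neg_of_pos (sub_neg.2 h0) (Real.exp_pos _)
  exact absurd (lt_of_le_of_lt hfin this) (not_lt.2 hwτge)

noncomputable def Afun (m : ℝ) (θ : ℝ) : ℝ :=
  θ + Real.arctan ((m - 1) * (Real.sin θ * Real.cos θ) / (Real.cos θ ^ 2 + m * Real.sin θ ^ 2))

lemma hasDerivAt_Afun {m : ℝ} (hm : 1 ≤ m) (θ : ℝ) :
    HasDerivAt (Afun m) (m / (Real.cos θ ^ 2 + m ^ 2 * Real.sin θ ^ 2)) θ := by
  have hsc := Real.sin_sq_add_cos_sq θ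
  set s := Real.sin θ
  set c := Real.cos θ
  have hs2 : (0:ℝ) ≤ s ^ 2 := sq_nonneg _
  have hD : 0 < c ^ 2 + m * s ^ 2 := by nlinarith
  have hm2 : 1 ≤ m ^ 2 := by nlinarith
  have hE : 0 < c ^ 2 + m ^ 2 * s ^ 2 := by nlinarith
  have hN : HasDerivAt (fun θ => (m - 1) * (Real.sin θ * Real.cos θ))
      ((m - 1) * (c ^ 2 - s ^ 2)) θ := by
    have := ((Real.hasDerivAt_sin θ).mul (Real.hasDerivAt_cos θ)).const_mul (m - 1)
    refine this.congr_deriv ?_; simp only [s, c]; ring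
  have hDD : HasDerivAt (fun θ => Real.cos θ ^ 2 + m * Real.sin θ ^ 2)
      (2 * (m - 1) * (s * c)) θ := by
    have h1 := (Real.hasDerivAt_cos θ).pow 2
    have h2 := ((Real.hasDerivAt_sin θ).pow 2).const_mul m
    have := h1.add h2
    refine this.congr_deriv ?_; push_cast; simp only [s, c]; ring
  have hu : HasDerivAt
      (fun θ => (m - 1) * (Real.sin θ * Real.cos θ) / (Real.cos θ ^ 2 + m * Real.sin θ ^ 2))
      (((m - 1) * (c ^ 2 - s ^ 2) * (c ^ 2 + m * s ^ 2)
        - (m - 1) * (s * c) * (2 * (m - 1) * (s * c))) / (c ^ 2 + m * s ^ 2) ^ 2) θ :=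
    hN.div hDD (ne_of_gt hD)
  have harc := (Real.hasDerivAt_arctan
      ((m - 1) * (s * c) / (c ^ 2 + m * s ^ 2))).comp θ hu
  have hA := (hasDerivAt_id θ).add harc
  have heq : (1 : ℝ) + 1 / (1 + ((m - 1) * (s * c) / (c ^ 2 + m * s ^ 2)) ^ 2) *
      (((m - 1) * (c ^ 2 - s ^ 2) * (c ^ 2 + m * s ^ 2)
        - (m - 1) * (s * c) * (2 * (m - 1) * (s * c))) / (c ^ 2 + m * s ^ 2) ^ 2)
      = m / (c ^ 2 + m ^ 2 * s ^ 2) := by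
    have h1 : (0:ℝ) < 1 + ((m - 1) * (s * c) / (c ^ 2 + m * s ^ 2)) ^ 2 := by positivity
    field_simp
    linear_combination (m * (s^2 + c^2) * (c^2 + m^2 * s^2)) * hsc
  rw [heq] at hA
  exact hA

lemma osc {u Q : ℝ → ℝ} {M : ℝ} (hM : 1 ≤ M)
    (hu : ∀ t ∈ Icc (0:ℝ) π, HasDerivWithinAt u
      (Real.cos (u t) ^ 2 + Q t * Real.sin (u t) ^ 2) (Icc 0 π) t)
    (hu0 : u 0 = 0)
    (hQM : ∀ t ∈ Icc (π/4) (3*π/4), M ≤ Q t) :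
    Real.sqrt M * (π/2) - 2*π ≤ u π := by
  have hπ := pi_pos
  set m := Real.sqrt M with hmdef
  have hm1 : 1 ≤ m := by
    rw [hmdef, show (1:ℝ) = Real.sqrt 1 from Real.sqrt_one.symm]
    exact Real.sqrt_le_sqrt hM
  have hm2 : m ^ 2 = M := Real.sq_sqrt (by linarith)
  have hsub : Icc (π/4) (3*π/4) ⊆ Icc (0:ℝ) π := Icc_subset_Icc (by linarith) (by linarith)
  have hαI : π/4 ∈ Icc (0:ℝ) π := ⟨by linarith, by linarith⟩
  have hβI : 3*π/4 ∈ Icc (0:ℝ) π := ⟨by linarith, by linarith⟩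
  have hαβ : π/4 ≤ 3*π/4 := by linarith
  have hAcont : Continuous (Afun m) :=
    continuous_iff_continuousAt.2 fun θ => (hasDerivAt_Afun hm1 θ).continuousAt
  have hucont : ContinuousOn u (Icc 0 π) := fun t ht => (hu t ht).continuousWithinAt
  set F := fun t => Afun m (u t) - m * t with hFdef
  have hFcont : ContinuousOn F (Icc (π/4) (3*π/4)) :=
    (hAcont.comp_continuousOn (hucont.mono hsub)).sub
      ((continuous_const.mul continuous_id).continuousOn)
  have hFd : ∀ x ∈ Ioo (π/4) (3*π/4), HasDerivAt F
      (m / (Real.cos (u x) ^ 2 + m ^ 2 * Real.sin (u x) ^ 2)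
        * (Real.cos (u x) ^ 2 + Q x * Real.sin (u x) ^ 2) - m) x := by
    intro x hx
    have hxI : x ∈ Icc (0:ℝ) π := hsub ⟨hx.1.le, hx.2.le⟩
    have hxN : Icc (0:ℝ) π ∈ 𝓝 x := Icc_mem_nhds (by linarith [hx.1]) (by linarith [hx.2])
    have hux := (hu x hxI).hasDerivAt hxN
    have h1 := (hasDerivAt_Afun hm1 (u x)).comp x hux
    have h2 : HasDerivAt (fun t : ℝ => m * t) m x := by
      simpa using (hasDerivAt_id x).const_mul m
    exact h1.sub h2
  have hFnonneg : ∀ x ∈ Ioo (π/4) (3*π/4),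
      0 ≤ m / (Real.cos (u x) ^ 2 + m ^ 2 * Real.sin (u x) ^ 2)
        * (Real.cos (u x) ^ 2 + Q x * Real.sin (u x) ^ 2) - m := by
    intro x hx
    have hsc := Real.sin_sq_add_cos_sq (u x)
    have hm2' : 1 ≤ m ^ 2 := by nlinarith
    have hY : 0 < Real.cos (u x) ^ 2 + m ^ 2 * Real.sin (u x) ^ 2 := by
      nlinarith [sq_nonneg (Real.sin (u x))]
    have hQx : M ≤ Q x := hQM x ⟨hx.1.le, hx.2.le⟩
    have hXY : Real.cos (u x) ^ 2 + m ^ 2 * Real.sin (u x) ^ 2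
        ≤ Real.cos (u x) ^ 2 + Q x * Real.sin (u x) ^ 2 := by
      nlinarith [sq_nonneg (Real.sin (u x))]
    rw [sub_nonneg, div_mul_eq_mul_div, le_div_iff₀ hY]
    nlinarith
  have hmono : MonotoneOn F (Icc (π/4) (3*π/4)) := by
    apply monotoneOn_of_deriv_nonneg (convex_Icc _ _) hFcont
    · intro x hx
      rw [interior_Icc] at hx
      exact (hFd x hx).differentiableAt.differentiableWithinAt
    · intro x hx
      rw [interior_Icc] at hx
      rw [(hFd x hx).deriv]
      exact hFnonneg x hx
  have hF := hmono (left_mem_Icc.2 hαβ) (right_mem_Icc.2 hαβ) hαβ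
  -- A bounds
  have hAub : ∀ θ, Afun m θ ≤ θ + π/2 :=
    fun θ => by
      have := Real.arctan_lt_pi_div_two ((m - 1) * (Real.sin θ * Real.cos θ) /
        (Real.cos θ ^ 2 + m * Real.sin θ ^ 2))
      simp only [Afun]; linarith
  have hAlb : ∀ θ, θ - π/2 ≤ Afun m θ :=
    fun θ => by
      have := Real.neg_pi_div_two_lt_arctan ((m - 1) * (Real.sin θ * Real.cos θ) /
        (Real.cos θ ^ 2 + m * Real.sin θ ^ 2))
      simp only [Afun]; linarith
  have huα : 0 ≤ u (π/4) := by
    have := barrier hu (by simp) (⟨le_rfl, hπ.le⟩ : (0:ℝ) ∈ Icc (0:ℝ) π) hαI hαI.1 (le_of_eq hu0.symm)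
    exact this
  have hβlb : m * (π/2) - π ≤ u (3*π/4) := by
    have h1 : Afun m (u (π/4)) - m * (π/4) ≤ Afun m (u (3*π/4)) - m * (3*π/4) := hF
    have h2 := hAub (u (3*π/4))
    have h3 := hAlb (u (π/4))
    nlinarith
  -- barrier down from 3π/4 to π at floor multiple
  set k : ℤ := ⌊u (3*π/4) / π⌋ with hk
  have hsk : Real.sin ((k:ℝ) * π) = 0 := Real.sin_int_mul_pi k
  have hckle : (k:ℝ) * π ≤ u (3*π/4) := by
    have := Int.floor_le (u (3*π/4) / π)
    calc (k:ℝ) * π ≤ (u (3*π/4) / π) * π := by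
          apply mul_le_mul_of_nonneg_right this hπ.le
      _ = u (3*π/4) := div_mul_cancel₀ _ hπ.ne'
  have hckgt : u (3*π/4) - π < (k:ℝ) * π := by
    have := Int.lt_floor_add_one (u (3*π/4) / π)
    have h2 : u (3*π/4) < ((k:ℝ) + 1) * π := by
      calc u (3*π/4) = (u (3*π/4) / π) * π := (div_mul_cancel₀ _ hπ.ne').symm
        _ < ((k:ℝ) + 1) * π := by
            apply mul_lt_mul_of_pos_right ?_ hπ
            push_cast
            exact this
    linarith
  have hfin : (k:ℝ) * π ≤ u π := barrier hu hsk hβI (right_mem_Icc.2 hπ.le) hβI.2 hckle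
  linarith

lemma quant {u v Q : ℝ → ℝ} {aa K C δ η : ℝ}
    (hu : ∀ t ∈ Icc (0:ℝ) π, HasDerivWithinAt u
      (Real.cos (u t) ^ 2 + Q t * Real.sin (u t) ^ 2) (Icc 0 π) t)
    (hv : ∀ t ∈ Icc (0:ℝ) π, HasDerivWithinAt v
      (Real.cos (v t) ^ 2 + aa * Real.sin (v t) ^ 2) (Icc 0 π) t)
    (hu0 : u 0 = 0) (hv0 : v 0 = 0)
    (hK : |aa - 1| ≤ K)
    (haQ : ∀ t ∈ Icc (0:ℝ) π, aa ≤ Q t)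
    (hQC : ∀ t ∈ Icc (0:ℝ) π, Q t ≤ C)
    (hδ : 0 < δ) (hδ2 : δ < π/2) (hη : 0 ≤ η)
    (hmid : ∀ t ∈ Icc δ (π - δ), Q t ≤ aa + η) :
    u π - v π ≤ gronwallBound (gronwallBound (gronwallBound 0 K
      ((C - aa) * ((1 + max C 0) * δ)^2) δ) K η (π - 2*δ)) K (C - aa) δ := by
  have hπ := pi_pos
  have h0I : (0:ℝ) ∈ Icc (0:ℝ) π := ⟨le_rfl, hπ.le⟩
  have hCa : aa ≤ C := le_trans (haQ 0 h0I) (hQC 0 h0I)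
  have hC' : 0 ≤ max C 0 := le_max_right _ _
  have hvQ : ∀ t ∈ Icc (0:ℝ) π, HasDerivWithinAt v
      (Real.cos (v t) ^ 2 + (fun _ : ℝ => aa) t * Real.sin (v t) ^ 2) (Icc 0 π) t := hv
  have hwge : ∀ t ∈ Icc (0:ℝ) π, v t ≤ u t :=
    compare hvQ hu haQ (fun t _ => hK) (by rw [hu0, hv0])
  set w := fun t => u t - v t with hwdef
  have hwd : ∀ t ∈ Icc (0:ℝ) π, HasDerivWithinAt w
      ((Real.cos (u t) ^ 2 + Q t * Real.sin (u t) ^ 2)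
        - (Real.cos (v t) ^ 2 + aa * Real.sin (v t) ^ 2)) (Icc 0 π) t :=
    fun t ht => (hu t ht).sub (hv t ht)
  -- master pointwise derivative bound
  have hwb : ∀ x ∈ Icc (0:ℝ) π,
      ((Real.cos (u x) ^ 2 + Q x * Real.sin (u x) ^ 2)
        - (Real.cos (v x) ^ 2 + aa * Real.sin (v x) ^ 2))
        ≤ K * w x + (Q x - aa) * Real.sin (u x) ^ 2 := by
    intro x hx
    have h1 : (Real.cos (u x) ^ 2 + aa * Real.sin (u x) ^ 2)
        - (Real.cos (v x) ^ 2 + aa * Real.sin (v x) ^ 2) ≤ K * |u x - v x| :=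
      wbound le_rfl hK
    rw [abs_of_nonneg (sub_nonneg.2 (hwge x hx))] at h1
    have : (Real.cos (u x) ^ 2 + Q x * Real.sin (u x) ^ 2)
        - (Real.cos (v x) ^ 2 + aa * Real.sin (v x) ^ 2)
        = ((Real.cos (u x) ^ 2 + aa * Real.sin (u x) ^ 2)
          - (Real.cos (v x) ^ 2 + aa * Real.sin (v x) ^ 2))
          + (Q x - aa) * Real.sin (u x) ^ 2 := by ring
    have hwx : w x = u x - v x := rfl
    rw [this, hwx]
    linarith
  -- bound u on [0, δ]
  have hub : ∀ x ∈ Icc (0:ℝ) δ, u x ≤ (1 + max C 0) * x := by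
    intro x hx
    have hxπ : x ≤ π := le_trans hx.2 (by linarith)
    have := gron (t0 := 0) (t1 := x) le_rfl hxπ hx.1 hu (le_of_eq hu0)
      (K := 0) (ε := 1 + max C 0) ?_
    · rw [gronwallBound_K0] at this
      simpa using this
    · intro z hz
      have hzI : z ∈ Icc (0:ℝ) π := ⟨hz.1, le_trans hz.2.le hxπ⟩
      have hs1 : Real.sin (u z) ^ 2 ≤ 1 := Real.sin_sq_le_one _
      have hs0 : 0 ≤ Real.sin (u z) ^ 2 := sq_nonneg _
      have hc1 : Real.cos (u z) ^ 2 ≤ 1 := Real.cos_sq_le_one _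
      have hQz := hQC z hzI
      have : Q z * Real.sin (u z) ^ 2 ≤ max C 0 := by
        rcases le_or_gt (Q z) 0 with h | h
        · calc Q z * Real.sin (u z) ^ 2 ≤ 0 := mul_nonpos_of_nonpos_of_nonneg h hs0
            _ ≤ max C 0 := hC'
        · calc Q z * Real.sin (u z) ^ 2 ≤ Q z * 1 := by nlinarith
            _ ≤ max C 0 := by rw [mul_one]; exact le_trans hQz (le_max_left _ _)
      rw [zero_mul]
      linarith
  have hun : ∀ x ∈ Icc (0:ℝ) π, 0 ≤ u x :=
    fun x hx => barrier hu (by simp) h0I hx hx.1 (le_of_eq hu0.symm)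
  -- segment 1
  have hseg1 : w δ ≤ gronwallBound 0 K ((C - aa) * ((1 + max C 0) * δ)^2) δ := by
    have := gron (t0 := 0) (t1 := δ) (K := K) (ε := (C - aa) * ((1 + max C 0) * δ)^2)
      le_rfl (by linarith) hδ.le hwd (by simp [hwdef, hu0, hv0] : w 0 ≤ 0) ?_
    · simpa using this
    · intro x hx
      have hxI : x ∈ Icc (0:ℝ) π := ⟨hx.1, by linarith [hx.2]⟩
      refine le_trans (hwb x hxI) ?_
      have h1 : Real.sin (u x) ^ 2 ≤ ((1 + max C 0) * δ)^2 := by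
        have hb1 : u x ≤ (1 + max C 0) * x := hub x ⟨hx.1, hx.2.le⟩
        have hb2 : |Real.sin (u x)| ≤ |u x| := Real.abs_sin_le_abs
        have hb3 : 0 ≤ u x := hun x hxI
        have hb4 : u x ≤ (1 + max C 0) * δ := le_trans hb1 (mul_le_mul_of_nonneg_left hx.2.le (by linarith))
        calc Real.sin (u x) ^ 2 = |Real.sin (u x)| ^ 2 := (sq_abs _).symm
          _ ≤ (u x) ^ 2 := by
              rw [← sq_abs (u x)]
              exact pow_le_pow_left₀ (abs_nonneg _) hb2 2
          _ ≤ ((1 + max C 0) * δ)^2 := by nlinarith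
      have h2 : Q x - aa ≤ C - aa := by linarith [hQC x hxI]
      have h3 : 0 ≤ Q x - aa := by linarith [haQ x hxI]
      have : (Q x - aa) * Real.sin (u x) ^ 2 ≤ (C - aa) * ((1 + max C 0) * δ)^2 :=
        mul_le_mul h2 h1 (sq_nonneg _) (by linarith)
      linarith
  -- segment 2
  have hseg2 : w (π - δ) ≤ gronwallBound (gronwallBound 0 K
      ((C - aa) * ((1 + max C 0) * δ)^2) δ) K η (π - 2*δ) := by
    have := gron (t0 := δ) (t1 := π - δ) (K := K) (ε := η) hδ.le (by linarith) (by linarith) hwd hseg1 ?_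
    · have he : π - δ - δ = π - 2*δ := by ring
      rwa [he] at this
    · intro x hx
      have hxI : x ∈ Icc (0:ℝ) π := ⟨by linarith [hx.1], by linarith [hx.2]⟩
      refine le_trans (hwb x hxI) ?_
      have h1 : Real.sin (u x) ^ 2 ≤ 1 := Real.sin_sq_le_one _
      have h3 : 0 ≤ Q x - aa := by linarith [haQ x hxI]
      have h2 : Q x - aa ≤ η := by
        have := hmid x ⟨hx.1, hx.2.le⟩; linarith
      have : (Q x - aa) * Real.sin (u x) ^ 2 ≤ η :=
        le_trans (mul_le_mul h2 h1 (sq_nonneg _) hη) (by linarith)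
      linarith
  -- segment 3
  have hside : ∀ x ∈ Ico (π - δ) π,
      ((Real.cos (u x) ^ 2 + Q x * Real.sin (u x) ^ 2)
        - (Real.cos (v x) ^ 2 + aa * Real.sin (v x) ^ 2)) ≤ K * w x + (C - aa) := by
    intro x hx
    have hxI : x ∈ Icc (0:ℝ) π := ⟨by linarith [hx.1], hx.2.le⟩
    refine le_trans (hwb x hxI) ?_
    have h1 : Real.sin (u x) ^ 2 ≤ 1 := Real.sin_sq_le_one _
    have h3 : 0 ≤ Q x - aa := by linarith [haQ x hxI]
    have h2 : Q x - aa ≤ C - aa := by linarith [hQC x hxI]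
    have : (Q x - aa) * Real.sin (u x) ^ 2 ≤ C - aa :=
      le_trans (mul_le_mul h2 h1 (sq_nonneg _) (by linarith)) (by linarith)
    linarith
  have hseg3 := gron (t0 := π - δ) (t1 := π) (by linarith) le_rfl (by linarith) hwd hseg2 hside
  have he : π - (π - δ) = δ := by ring
  rw [he] at hseg3
  exact hseg3

lemma claim3 {Wl Wv Q : ℝ → ℝ} {a : ℝ}
    (hu : ∀ t ∈ Icc (0:ℝ) π, HasDerivWithinAt Wl
      (Real.cos (Wl t) ^ 2 + Q t * Real.sin (Wl t) ^ 2) (Icc 0 π) t)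
    (hva : ∀ t ∈ Icc (0:ℝ) π, HasDerivWithinAt Wv
      (Real.cos (Wv t) ^ 2 + a * Real.sin (Wv t) ^ 2) (Icc 0 π) t)
    (h0u : Wl 0 = 0) (h0v : Wv 0 = 0)
    (hQa : ∀ t ∈ Icc (0:ℝ) π, a < Q t) :
    Wv π < Wl π := by
  have hπ := pi_pos
  have hπI : π ∈ Icc (0:ℝ) π := right_mem_Icc.2 hπ.le
  have hva' : ∀ t ∈ Icc (0:ℝ) π, HasDerivWithinAt Wv
      (Real.cos (Wv t) ^ 2 + (fun _ : ℝ => a) t * Real.sin (Wv t) ^ 2) (Icc 0 π) t := hva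
  have hle : ∀ t ∈ Icc (0:ℝ) π, Wv t ≤ Wl t :=
    compare hva' hu (fun t ht => (hQa t ht).le) (fun t _ => le_rfl) (by rw [h0u, h0v])
  by_contra hng
  push_neg at hng
  have heqπ : Wv π = Wl π := le_antisymm (hle π hπI) hng
  have hall : ∀ t ∈ Icc (0:ℝ) π, Wv t = Wl t := by
    intro t ht
    by_contra hne
    have hlt : Wv t < Wl t := lt_of_le_of_ne (hle t ht) hne
    have := strict_compare hva' hu (fun t ht => (hQa t ht).le) (fun t _ => le_rfl)
      ht hπI ht.2 hlt
    exact absurd heqπ (ne_of_lt this)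
  have hsin : ∀ t ∈ Ioo (0:ℝ) π, Real.sin (Wv t) = 0 := by
    intro t ht
    have htI : t ∈ Icc (0:ℝ) π := ⟨ht.1.le, ht.2.le⟩
    have hN : Icc (0:ℝ) π ∈ 𝓝 t := Icc_mem_nhds ht.1 ht.2
    have hee : Wl =ᶠ[𝓝 t] Wv := by
      filter_upwards [hN] with z hz
      exact (hall z hz).symm
    have h1 : HasDerivAt Wv (Real.cos (Wl t) ^ 2 + Q t * Real.sin (Wl t) ^ 2) t :=
      ((hu t htI).hasDerivAt hN).congr_of_eventuallyEq hee.symm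
    have h2 : HasDerivAt Wv (Real.cos (Wv t) ^ 2 + a * Real.sin (Wv t) ^ 2) t :=
      (hva t htI).hasDerivAt hN
    have heq := h1.unique h2
    rw [hall t htI] at heq
    have hz : (Q t - a) * Real.sin (Wl t) ^ 2 = 0 := by linarith
    rcases mul_eq_zero.1 hz with h | h
    · exact absurd h (by have := hQa t htI; intro hc; linarith)
    · rw [hall t htI]
      exact pow_eq_zero_iff (by norm_num) |>.1 h
  have hmemhalf : (π/2) ∈ Ioo (0:ℝ) π := ⟨by linarith, by linarith⟩
  have hvcont : ContinuousOn Wv (Icc 0 π) := fun t ht => (hva t ht).continuousWithinAt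
  have hconst : ∀ t ∈ Ioo (0:ℝ) π, Wv t = Wv (π/2) := by
    intro t ht
    by_contra hne
    obtain ⟨k1, hk1⟩ := Real.sin_eq_zero_iff.1 (hsin t ht)
    obtain ⟨k2, hk2⟩ := Real.sin_eq_zero_iff.1 (hsin (π/2) hmemhalf)
    have hkne : k1 ≠ k2 := by
      intro hc
      rw [hc] at hk1
      exact hne (hk1.symm ▸ hk2)
    -- IVT on uIcc t (π/2)
    have hsub : uIcc t (π/2) ⊆ Ioo (0:ℝ) π := fun z hz =>
      ⟨lt_of_lt_of_le (lt_min ht.1 hmemhalf.1) hz.1,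
        lt_of_le_of_lt hz.2 (max_lt ht.2 hmemhalf.2)⟩
    have hcont' : ContinuousOn Wv (uIcc t (π/2)) :=
      hvcont.mono (fun z hz => let h := hsub hz; ⟨h.1.le, h.2.le⟩)
    have hivt := intermediate_value_uIcc hcont'
    have key : ∀ kk kj : ℤ, (kj:ℝ) * π = (kk:ℝ) * π + π/2 → False := by
      intro kk kj hf
      have h3 : (2*((kj:ℝ) - kk) - 1) * (π/2) = 0 := by linarith
      have h4 : 2*((kj:ℝ) - kk) - 1 = 0 := by
        rcases mul_eq_zero.1 h3 with h | h
        · exact h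
        · exact absurd h (by positivity)
      have h5 : ((2*(kj - kk) : ℤ) : ℝ) = 1 := by push_cast; linarith
      have h6 : (2*(kj - kk) : ℤ) = 1 := by exact_mod_cast h5
      omega
    have habs : π ≤ |Wv t - Wv (π/2)| := by
      rw [← hk1, ← hk2, ← sub_mul, abs_mul, abs_of_pos hπ]
      have h1 : (1:ℝ) ≤ |(k1:ℝ) - (k2:ℝ)| := by
        exact_mod_cast Int.one_le_abs (sub_ne_zero.2 hkne)
      nlinarith [abs_nonneg ((k1:ℝ) - k2)]
    rcases le_total (Wv t) (Wv (π/2)) with h | h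
    · have habs' : π ≤ Wv (π/2) - Wv t := by
        rw [abs_of_nonpos (by linarith)] at habs; linarith
      have hc0mem : Wv t + π/2 ∈ uIcc (Wv t) (Wv (π/2)) := by
        rw [uIcc_of_le h]; exact ⟨by linarith, by linarith⟩
      obtain ⟨τ, hτmem, hτval⟩ := hivt hc0mem
      obtain ⟨k3, hk3⟩ := Real.sin_eq_zero_iff.1 (hsin τ (hsub hτmem))
      exact key k1 k3 (by rw [hk3, hτval, ← hk1])
    · have habs' : π ≤ Wv t - Wv (π/2) := by
        rw [abs_of_nonneg (by linarith)] at habs; linarith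
      have hc0mem : Wv (π/2) + π/2 ∈ uIcc (Wv t) (Wv (π/2)) := by
        rw [uIcc_of_ge h]; exact ⟨by linarith, by linarith⟩
      obtain ⟨τ, hτmem, hτval⟩ := hivt hc0mem
      obtain ⟨k3, hk3⟩ := Real.sin_eq_zero_iff.1 (hsin τ (hsub hτmem))
      exact key k2 k3 (by rw [hk3, hτval, ← hk2])
  -- contradiction: Wv locally constant at π/2 but derivative is 1
  have hee : Wv =ᶠ[𝓝 (π/2)] (fun _ => Wv (π/2)) := by
    filter_upwards [Ioo_mem_nhds hmemhalf.1 hmemhalf.2] with z hz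
    exact hconst z hz
  have hd0 : HasDerivAt Wv 0 (π/2) :=
    (hasDerivAt_const (π/2) (Wv (π/2))).congr_of_eventuallyEq hee
  have hd1 : HasDerivAt Wv (Real.cos (Wv (π/2)) ^ 2 + a * Real.sin (Wv (π/2)) ^ 2) (π/2) :=
    (hva (π/2) ⟨hmemhalf.1.le, hmemhalf.2.le⟩).hasDerivAt
      (Icc_mem_nhds hmemhalf.1 hmemhalf.2)
  have heq := hd0.unique hd1
  have hsc := Real.sin_sq_add_cos_sq (Wv (π/2))
  rw [hsin (π/2) hmemhalf] at heq hsc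
  simp at heq hsc
  rcases hsc with h | h <;> rw [h] at heq <;> norm_num at heq

/-- f'' < 0 with b = lim_{s→+∞} -f'(s) = +∞: W₂(λ) → +∞ as λ → +∞;
symmetrically W₂(λ) decreases to W₁(a,π) as λ → -∞, where a = lim_{s→-∞} -f'(s). -/
theorem prufer_limit_lambda_infinite (f h p : ℝ → ℝ) (a : ℝ)
    (hf : ContDiff ℝ 2 f) (hconc : ∀ s : ℝ, deriv (deriv f) s < 0)
    (hbtop : Tendsto (fun s => -deriv f s) atTop atTop)
    (ha : Tendsto (fun s => -deriv f s) atBot (𝓝 a))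
    (hh : ContinuousOn h (Icc 0 π)) (hp : ContinuousOn p (Icc 0 π))
    (hppos : ∀ t ∈ Ioo (0:ℝ) π, 0 < p t)
    (W : ℝ → ℝ → ℝ) (Wa : ℝ → ℝ)
    (hW0 : ∀ lam : ℝ, W lam 0 = 0)
    (hW : ∀ lam : ℝ, ∀ t ∈ Icc (0:ℝ) π, HasDerivWithinAt (W lam)
      (cos (W lam t) ^ 2 - deriv f (h t + lam * p t) * sin (W lam t) ^ 2) (Icc 0 π) t)
    (hWa0 : Wa 0 = 0)
    (hWa : ∀ t ∈ Icc (0:ℝ) π,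
      HasDerivWithinAt Wa (cos (Wa t) ^ 2 + a * sin (Wa t) ^ 2) (Icc 0 π) t) :
    Tendsto (fun lam => W lam π) atTop atTop ∧
    Tendsto (fun lam => W lam π) atBot (𝓝 (Wa π)) ∧
    ∀ lam : ℝ, Wa π < W lam π := by
  have hπ := pi_pos
  -- basic facts about f
  have hf2 : ContDiff ℝ ((1:ℕ) + 1) f := by exact_mod_cast hf
  have hf1 : ContDiff ℝ (1:ℕ) (deriv f) := (contDiff_succ_iff_deriv.mp hf2).2.2
  have hf'd : Differentiable ℝ (deriv f) := hf1.differentiable (by norm_num)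
  have hf'c : Continuous (deriv f) := hf'd.continuous
  have hanti : StrictAnti (deriv f) := strictAnti_of_deriv_neg hconc
  have hgt : ∀ s : ℝ, a < -deriv f s := by
    intro s
    have h1 : deriv f s < deriv f (s - 1) := hanti (by linarith)
    have h2 : a ≤ -deriv f (s - 1) := by
      refine le_of_tendsto ha ?_
      filter_upwards [eventually_le_atBot (s - 1)] with y hy
      have := hanti.antitone hy
      linarith
    linarith
  -- rewrite derivatives
  have hW' : ∀ lam : ℝ, ∀ t ∈ Icc (0:ℝ) π, HasDerivWithinAt (W lam)
      (Real.cos (W lam t) ^ 2 + (fun t => -deriv f (h t + lam * p t)) t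
        * Real.sin (W lam t) ^ 2) (Icc 0 π) t := by
    intro lam t ht
    have := hW lam t ht
    have he : Real.cos (W lam t) ^ 2 - deriv f (h t + lam * p t) * Real.sin (W lam t) ^ 2
        = Real.cos (W lam t) ^ 2 + (fun t => -deriv f (h t + lam * p t)) t
          * Real.sin (W lam t) ^ 2 := by simp; ring
    rwa [he] at this
  -- p nonneg on Icc
  have hpnn : ∀ t ∈ Icc (0:ℝ) π, 0 ≤ p t := by
    intro t ht
    rcases eq_or_lt_of_le ht.1 with h0 | h0
    · have hcw : ContinuousWithinAt p (Icc 0 π) 0 := hp 0 ⟨le_rfl, hπ.le⟩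
      have hne : (𝓝[Ioo (0:ℝ) π] (0:ℝ)).NeBot := by
        apply mem_closure_iff_nhdsWithin_neBot.1
        rw [closure_Ioo hπ.ne]
        exact ⟨le_rfl, hπ.le⟩
      have htd : Tendsto p (𝓝[Ioo (0:ℝ) π] 0) (𝓝 (p 0)) := hcw.mono Ioo_subset_Icc_self
      rw [← h0]
      exact ge_of_tendsto htd
        (eventually_mem_nhdsWithin.mono fun z hz => (hppos z hz).le)
    · rcases eq_or_lt_of_le ht.2 with hπe | hπl
      · have hcw : ContinuousWithinAt p (Icc 0 π) π := hp π ⟨hπ.le, le_rfl⟩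
        have hne : (𝓝[Ioo (0:ℝ) π] π).NeBot := by
          apply mem_closure_iff_nhdsWithin_neBot.1
          rw [closure_Ioo hπ.ne]
          exact ⟨hπ.le, le_rfl⟩
        have htd : Tendsto p (𝓝[Ioo (0:ℝ) π] π) (𝓝 (p π)) := hcw.mono Ioo_subset_Icc_self
        rw [hπe]
        exact ge_of_tendsto htd
          (eventually_mem_nhdsWithin.mono fun z hz => (hppos z hz).le)
      · exact (hppos t ⟨h0, hπl⟩).le
  -- claim 3
  have hc3 : ∀ lam : ℝ, Wa π < W lam π := fun lam =>
    claim3 (hW' lam) hWa (hW0 lam) hWa0 (fun t _ => hgt _)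
  -- C : max of -f'(h t)
  obtain ⟨tC, htC, hCmax⟩ := isCompact_Icc.exists_isMaxOn (nonempty_Icc.2 hπ.le)
    ((hf'c.comp_continuousOn hh).neg)
  set C := -deriv f (h tC) with hCdef
  -- Hm : max of h
  obtain ⟨tH, htH, hHmax⟩ := isCompact_Icc.exists_isMaxOn (nonempty_Icc.2 hπ.le) hh
  -- hm : min of h
  obtain ⟨tm, htm, hhmin⟩ := isCompact_Icc.exists_isMinOn (nonempty_Icc.2 hπ.le) hh
  refine ⟨?_, ?_, hc3⟩
  · -- claim 1 : tendsto atTop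
    have hsub14 : Icc (π/4) (3*π/4) ⊆ Icc (0:ℝ) π := Icc_subset_Icc (by linarith) (by linarith)
    obtain ⟨t1, ht1, hpmin⟩ := isCompact_Icc.exists_isMinOn
      (nonempty_Icc.2 (by linarith : π/4 ≤ 3*π/4)) (hp.mono hsub14)
    have hpm : 0 < p t1 := hppos t1 ⟨by linarith [ht1.1], by linarith [ht1.2]⟩
    have hMtend : Tendsto (fun lam => -deriv f (h tm + lam * p t1)) atTop atTop :=
      hbtop.comp (tendsto_atTop_add_const_left _ _ (tendsto_id.atTop_mul_const hpm))
    rw [tendsto_atTop]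
    intro b
    set r := max 0 ((b + 2*π) * (2/π)) with hrdef
    filter_upwards [hMtend.eventually_ge_atTop (max 1 (r^2)), eventually_ge_atTop (0:ℝ)]
      with lam hM hlam0
    have hosc := osc (M := max 1 (r^2)) (le_max_left _ _) (hW' lam) (hW0 lam) ?_
    · have hr0 : 0 ≤ r := le_max_left _ _
      have hs1 : r ≤ Real.sqrt (max 1 (r^2)) := by
        nth_rewrite 1 [show r = Real.sqrt (r^2) from (Real.sqrt_sq hr0).symm]
        exact Real.sqrt_le_sqrt (le_max_right _ _)
      have hs2 : (b + 2*π) * (2/π) ≤ r := le_max_right _ _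
      have hkey : (b + 2*π) * (2/π) * (π/2) = b + 2*π := by field_simp
      have h3 : r * (π/2) ≥ b + 2*π := by
        calc r * (π/2) ≥ (b + 2*π) * (2/π) * (π/2) :=
              mul_le_mul_of_nonneg_right hs2 (by linarith)
          _ = b + 2*π := hkey
      have h4 : Real.sqrt (max 1 (r^2)) * (π/2) ≥ r * (π/2) :=
        mul_le_mul_of_nonneg_right hs1 (by linarith)
      linarith
    · intro t ht
      refine le_trans hM ?_
      have h5 : h tm + lam * p t1 ≤ h t + lam * p t := by
        have h6 : h tm ≤ h t := hhmin (hsub14 ht)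
        have h7 : lam * p t1 ≤ lam * p t := mul_le_mul_of_nonneg_left (hpmin ht : p t1 ≤ p t) hlam0
        linarith
      have h8 := hanti.antitone h5
      show -deriv f (h tm + lam * p t1) ≤ -deriv f (h t + lam * p t)
      linarith
  · -- claim 2 : tendsto atBot to Wa π
    set K := |a - 1| + 1 with hKdef
    have hKa : |a - 1| ≤ K := by rw [hKdef]; linarith
    have hKne : K ≠ 0 := by positivity
    rw [Metric.tendsto_nhds]
    intro ε hε
    set g : ℝ → ℝ := fun d => gronwallBound (gronwallBound (gronwallBound 0 K
      ((C - a) * ((1 + max C 0) * d)^2) d) K d (π - 2*d)) K (C - a) d with hgdef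
    have hg0 : g 0 = 0 := by
      rw [hgdef]
      simp [gronwallBound_x0, gronwallBound_ε0]
    have hgc : ContinuousAt g 0 := by
      have hrw : ∀ δ ε x : ℝ, gronwallBound δ K ε x
          = δ * Real.exp (K*x) + ε/K * (Real.exp (K*x) - 1) := by
        intro δ ε x
        rw [gronwallBound_of_K_ne_0 hKne]
      have hgeq : g = fun d => ((0 * Real.exp (K*d) + ((C - a) * ((1 + max C 0) * d)^2)/K
          * (Real.exp (K*d) - 1)) * Real.exp (K*(π - 2*d)) + d/K * (Real.exp (K*(π - 2*d)) - 1))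
          * Real.exp (K*d) + (C - a)/K * (Real.exp (K*d) - 1) := by
        funext d
        rw [hgdef]
        simp only
        rw [hrw, hrw, hrw]
      rw [hgeq]
      fun_prop
    have hev1 : ∀ᶠ d in 𝓝[>] (0:ℝ), g d < ε := by
      apply eventually_nhdsWithin_of_eventually_nhds
      have := hgc.tendsto
      rw [hg0] at this
      exact this.eventually (eventually_lt_nhds hε)
    have hev2 : ∀ᶠ d in 𝓝[>] (0:ℝ), d < π/2 :=
      eventually_nhdsWithin_of_eventually_nhds (eventually_lt_nhds (by linarith))
    obtain ⟨d, hd1, hd3⟩ := ((hev1.and hev2).and eventually_mem_nhdsWithin).exists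
    obtain ⟨hdg, hdh⟩ := hd1
    have hdpos : (0:ℝ) < d := hd3
    obtain ⟨t3, ht3, hpdmin⟩ := isCompact_Icc.exists_isMinOn
      (nonempty_Icc.2 (by linarith : d ≤ π - d))
      (hp.mono (Icc_subset_Icc (by linarith) (by linarith)))
    have hpd : 0 < p t3 := hppos t3 ⟨by linarith [ht3.1], by linarith [ht3.2]⟩
    have htendmid : Tendsto (fun lam => -deriv f (h tH + lam * p t3)) atBot (𝓝 a) :=
      ha.comp (tendsto_atBot_add_const_left _ _ (tendsto_id.atBot_mul_const hpd))
    have hevmid := htendmid.eventually (eventually_lt_nhds (by linarith : a < a + d))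
    filter_upwards [hevmid, eventually_le_atBot (0:ℝ)] with lam hmid hlam0
    have hQC : ∀ t ∈ Icc (0:ℝ) π, (fun t => -deriv f (h t + lam * p t)) t ≤ C := by
      intro t ht
      have h1 : h t + lam * p t ≤ h t := by nlinarith [hpnn t ht]
      have h2 := hanti.antitone h1
      have h3 : -deriv f (h t) ≤ -deriv f (h tC) := hCmax ht
      show -deriv f (h t + lam * p t) ≤ C
      rw [hCdef]
      linarith
    have hmid' : ∀ t ∈ Icc d (π - d), (fun t => -deriv f (h t + lam * p t)) t ≤ a + d := by
      intro t ht
      have htI : t ∈ Icc (0:ℝ) π := ⟨by linarith [ht.1], by linarith [ht.2]⟩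
      have h1 : h t + lam * p t ≤ h tH + lam * p t3 := by
        have h2 : h t ≤ h tH := hHmax htI
        have h3 : lam * p t ≤ lam * p t3 := mul_le_mul_of_nonpos_left (hpdmin ht : p t3 ≤ p t) hlam0
        linarith
      have h2 := hanti.antitone h1
      show -deriv f (h t + lam * p t) ≤ a + d
      linarith [hmid]
    have hq := quant (hW' lam) hWa (hW0 lam) hWa0 hKa
      (fun t _ => (hgt _).le) hQC hdpos hdh hdpos.le hmid'
    rw [Real.dist_eq, abs_of_pos (by linarith [hc3 lam] : (0:ℝ) < W lam π - Wa π)]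
    have hgd : W lam π - Wa π ≤ g d := hq
    linarith [hdg]
end

section
/- Suppose f is C² and f''(s) > 0 for all s (or f''(s) < 0 for all s). Then for every u ∈ X and every φ ∈ X with φ(t) > 0 on (0,π), one has DW(u)(π)·φ ≠ 0 (strictly negative if f''>0, strictly positive if f''<0). Consequently every nonempty level set M_θ = {u ∈ X : W(u)(π) = θ} is a C² codimension-one submanifold of X. -/
open Real Set intervalIntegral

/-!
The energy `E = v² + v'²` of the linearized solution satisfies `|E'| ≤ (1 + C) E`, where `C`
bounds `f' ∘ u` on `[0, π]`, so `t ↦ exp ((1 + C) t) E(t)` is nondecreasing and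
`E(π) ≥ exp (-(1 + C) π) E(0) > 0`. Since `v'(0) = 1`, `v` does not vanish identically on
`(0, π)`, so the continuous integrand `f''(u) φ v²`, of one strict sign where `v ≠ 0`, has a
nonzero integral of that sign.
-/

theorem monotoneOn_exp_mul_mul_of_neg_mul_le_deriv {E E' : ℝ → ℝ} {a b K : ℝ}
    (hE : ContinuousOn E (Icc a b))
    (hE' : ∀ t ∈ Ioo a b, HasDerivWithinAt E (E' t) (Ioo a b) t)
    (hbound : ∀ t ∈ Ioo a b, -(K * E t) ≤ E' t) :
    MonotoneOn (fun t => exp (K * t) * E t) (Icc a b) := by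
  refine monotoneOn_of_hasDerivWithinAt_nonneg (convex_Icc a b)
    ((continuous_const.mul continuous_id).rexp.continuousOn.mul hE) (f' := fun t =>
      exp (K * t) * (K * E t + E' t)) ?_ ?_ <;> rw [interior_Icc] <;> intro t ht
  · have hexp : HasDerivWithinAt (fun t => exp (K * t)) (exp (K * t) * K) (Ioo a b) t :=
      (((hasDerivAt_id t).const_mul K).exp.hasDerivWithinAt).congr_deriv (by simp)
    exact (hexp.mul (hE' t ht)).congr_deriv (by ring)
  · exact mul_nonneg (exp_pos _).le (by linarith [hbound t ht])

theorem sq_add_sq_pos_of_linear_ode {q v v' : ℝ → ℝ} {a b : ℝ} (hab : a ≤ b)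
    (hq : ContinuousOn q (Icc a b))
    (hv : ∀ t ∈ Icc a b, HasDerivWithinAt v (v' t) (Icc a b) t)
    (hv' : ∀ t ∈ Icc a b, HasDerivWithinAt v' (q t * v t) (Icc a b) t)
    (ha : 0 < v a ^ 2 + v' a ^ 2) :
    0 < v b ^ 2 + v' b ^ 2 := by
  obtain ⟨C, hC⟩ := isCompact_Icc.exists_bound_of_continuousOn hq
  have hE : ∀ t ∈ Icc a b, HasDerivWithinAt (fun t => v t ^ 2 + v' t ^ 2)
      ((1 + q t) * (2 * v t * v' t)) (Icc a b) t := fun t ht =>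
    (((hv t ht).pow 2).add ((hv' t ht).pow 2)).congr_deriv (by ring)
  have hbound : ∀ t ∈ Ioo a b,
      -((1 + C) * (v t ^ 2 + v' t ^ 2)) ≤ (1 + q t) * (2 * v t * v' t) := by
    intro t ht
    have hq_le : |1 + q t| ≤ 1 + C :=
      (abs_add_le _ _).trans (by simpa using hC t (Ioo_subset_Icc_self ht))
    have hvv : |2 * v t * v' t| ≤ v t ^ 2 + v' t ^ 2 := abs_le.2
      ⟨by nlinarith [two_mul_le_add_sq (v t) (-v' t)], two_mul_le_add_sq _ _⟩
    calc -((1 + C) * (v t ^ 2 + v' t ^ 2))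
        ≤ -(|1 + q t| * |2 * v t * v' t|) :=
          neg_le_neg (mul_le_mul hq_le hvv (abs_nonneg _) ((abs_nonneg _).trans hq_le))
      _ = -|(1 + q t) * (2 * v t * v' t)| := by rw [← abs_mul]
      _ ≤ _ := neg_abs_le _
  have hmono := monotoneOn_exp_mul_mul_of_neg_mul_le_deriv
    (fun t ht => (hE t ht).continuousWithinAt)
    (fun t ht => ((hE t (Ioo_subset_Icc_self ht)).mono Ioo_subset_Icc_self)) hbound
  have hgrowth := hmono (left_mem_Icc.2 hab) (right_mem_Icc.2 hab) hab
  exact pos_of_mul_pos_right ((mul_pos (exp_pos _) ha).trans_le hgrowth) (exp_pos _).le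

theorem exists_mem_Ioo_ne_zero_of_hasDerivWithinAt {v : ℝ → ℝ} {a b c : ℝ} (hab : a < b)
    (hv : HasDerivWithinAt v c (Icc a b) a) (hva : v a = 0) (hc : c ≠ 0) :
    ∃ t ∈ Ioo a b, v t ≠ 0 := by
  by_contra! hzero
  have hunique : UniqueDiffWithinAt ℝ (Ioo a b) a :=
    uniqueDiffWithinAt_convex (convex_Ioo a b) (by simp [hab]) (by simp [hab.ne, hab.le])
  exact hc (hunique.eq_deriv _ (hv.mono Ioo_subset_Icc_self)
    ((hasDerivWithinAt_const a _ 0).congr hzero hva))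

theorem integral_mul_mul_sq_pos {g φ v : ℝ → ℝ} {a b : ℝ} (hab : a < b)
    (hg : ContinuousOn g (Icc a b)) (hg_pos : ∀ t ∈ Icc a b, 0 < g t)
    (hφ : ContinuousOn φ (Icc a b)) (hφ_pos : ∀ t ∈ Ioo a b, 0 < φ t)
    (hv : ContinuousOn v (Icc a b)) (hv_ne : ∃ t ∈ Ioo a b, v t ≠ 0) :
    0 < ∫ r in a..b, g r * φ r * v r ^ 2 := by
  have hφ_nonneg : ∀ t ∈ Icc a b, 0 ≤ φ t := by
    rw [← closure_Ioo hab.ne]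
    exact le_on_closure (fun t ht => (hφ_pos t ht).le) continuousOn_const
      (by rwa [closure_Ioo hab.ne])
  obtain ⟨t, ht, hvt⟩ := hv_ne
  refine integral_pos hab ((hg.mul hφ).mul (hv.pow 2)) (fun r hr => ?_)
    ⟨t, Ioo_subset_Icc_self ht, ?_⟩
  · have hr' := Ioc_subset_Icc_self hr
    exact mul_nonneg (mul_nonneg (hg_pos r hr').le (hφ_nonneg r hr')) (sq_nonneg _)
  · exact mul_pos (mul_pos (hg_pos t (Ioo_subset_Icc_self ht)) (hφ_pos t ht)) (by positivity)

/-- if f'' > 0 everywhere (resp. f'' < 0 everywhere), then for every u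
and every direction φ > 0 on (0,π), DW(u)(π)·φ is strictly negative
(resp. strictly positive); in particular it is nonzero, so the level sets
M_θ = {u : W(u)(π) = θ} are regular (codimension-one) level sets. -/
theorem prufer_derivative_sign (f u φ v v' : ℝ → ℝ)
    (hf : ContDiff ℝ 2 f)
    (hu : ContinuousOn u (Icc 0 π))
    (hφ : ContinuousOn φ (Icc 0 π)) (hφpos : ∀ t ∈ Ioo (0:ℝ) π, 0 < φ t)
    (hv : ∀ t ∈ Icc (0:ℝ) π, HasDerivWithinAt v (v' t) (Icc 0 π) t)
    (hv' : ∀ t ∈ Icc (0:ℝ) π, HasDerivWithinAt v' (deriv f (u t) * v t) (Icc 0 π) t)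
    (hv0 : v 0 = 0) (hv'0 : v' 0 = 1) :
    ((∀ s : ℝ, 0 < deriv (deriv f) s) →
      -(v π ^ 2 + v' π ^ 2)⁻¹ *
        (∫ r in (0:ℝ)..π, deriv (deriv f) (u r) * φ r * v r ^ 2) < 0) ∧
    ((∀ s : ℝ, deriv (deriv f) s < 0) →
      0 < -(v π ^ 2 + v' π ^ 2)⁻¹ *
        (∫ r in (0:ℝ)..π, deriv (deriv f) (u r) * φ r * v r ^ 2)) := by
  have hf'' : ContinuousOn (fun r => deriv (deriv f) (u r)) (Icc 0 π) :=
    ((hf.deriv' (n := 1)).continuous_deriv le_rfl).comp_continuousOn hu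
  have henergy : 0 < v π ^ 2 + v' π ^ 2 :=
    sq_add_sq_pos_of_linear_ode pi_pos.le ((hf.continuous_deriv one_le_two).comp_continuousOn hu)
      hv hv' (by simp [hv0, hv'0])
  have hcoef : -(v π ^ 2 + v' π ^ 2)⁻¹ < 0 := neg_neg_of_pos (inv_pos.2 henergy)
  have hvc : ContinuousOn v (Icc 0 π) := fun t ht => (hv t ht).continuousWithinAt
  have hv_ne : ∃ t ∈ Ioo 0 π, v t ≠ 0 :=
    exists_mem_Ioo_ne_zero_of_hasDerivWithinAt pi_pos (hv'0 ▸ hv 0 ⟨le_rfl, pi_pos.le⟩) hv0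
      one_ne_zero
  constructor
  · intro hpos
    exact mul_neg_of_neg_of_pos hcoef (integral_mul_mul_sq_pos pi_pos hf''
      (fun t _ => hpos (u t)) hφ hφpos hvc hv_ne)
  · intro hneg
    have hI := integral_mul_mul_sq_pos pi_pos hf''.neg (fun t _ => neg_pos.2 (hneg (u t)))
      hφ hφpos hvc hv_ne
    simp only [Pi.neg_apply, neg_mul, intervalIntegral.integral_neg, neg_pos] at hI
    exact mul_pos_of_neg_of_neg hcoef hI
end
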